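/- arXiv:math/0701553 — 8 statements merged into one kernel-verified Lean document; each statement's English description precedes it below -/
import Mathlib

section
/- For every prime power q, there exists a covering array CA(q², q+1, q); that is, a (q+1) × q² array over an alphabet of size q in which any two distinct rows are qualitatively independent. -/
/-- Two vectors `u v : Fin k ^ n` are qualitatively independent if every ordered
pair of letters occurs in some coordinate. -/
def QIVec {n k : ℕ} (u v : Fin n → Fin k) : Prop :=
  ∀ a b : Fin k, ∃ i, u i = a ∧ v i = b

/-- The row function of the covering array: row `i` evaluated at column `z`. -/
def rowFn {F : Type*} [Field F] {q : ℕ} (e : Fin q ≃ F) (i : Fin (q + 1)) (z : F × F) : F :=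
  if h : (i : ℕ) < q then (e ⟨i, h⟩) * z.1 + z.2 else z.1

/-- Solving a 2×2 linear system with distinct slopes. -/
lemma key_solve {F : Type*} [Field F] (r s A B : F) (hrs : r ≠ s) :
    ∃ x y : F, r * x + y = A ∧ s * x + y = B := by
  refine ⟨(A - B) / (r - s), A - r * ((A - B) / (r - s)), by ring, ?_⟩
  have hx : (r - s) * ((A - B) / (r - s)) = A - B :=
    mul_div_cancel₀ _ (sub_ne_zero.mpr hrs)
  linear_combination -hx

/-- For every prime power `q` there exists a covering array `CA(q², q+1, q)`:
a `(q+1) × q²` array over an alphabet of size `q` in which any two distinct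
rows are qualitatively independent. -/
theorem exists_CA_prime_power (q : ℕ) (hq : IsPrimePow q) :
    ∃ C : Fin (q + 1) → Fin (q ^ 2) → Fin q,
      ∀ i j, i ≠ j → QIVec (C i) (C j) := by
  obtain ⟨p, k, hp, hk, rfl⟩ := hq
  haveI : Fact p.Prime := ⟨hp.nat_prime⟩
  set q := p ^ k with hqdef
  let F := GaloisField p k
  haveI : Fintype F := Fintype.ofFinite F
  have hcard : Fintype.card F = q := by
    rw [← Nat.card_eq_fintype_card]; exact GaloisField.card p k hk.ne'
  let e : Fin q ≃ F := (Fintype.equivFinOfCardEq hcard).symm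
  have hcard2 : Fintype.card (F × F) = q ^ 2 := by
    simp [Fintype.card_prod, hcard, sq]
  let e2 : Fin (q ^ 2) ≃ F × F := (Fintype.equivFinOfCardEq hcard2).symm
  refine ⟨fun i j => e.symm (rowFn e i (e2 j)), ?_⟩
  intro i j hij a b
  suffices h : ∃ z : F × F, rowFn e i z = e a ∧ rowFn e j z = e b by
    obtain ⟨z, h1, h2⟩ := h
    refine ⟨e2.symm z, ?_, ?_⟩ <;>
      dsimp only <;> rw [Equiv.apply_symm_apply]
    · rw [h1, Equiv.symm_apply_apply]
    · rw [h2, Equiv.symm_apply_apply]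
  by_cases hi : (i : ℕ) < q <;> by_cases hj : (j : ℕ) < q
  · have hrs : e ⟨(i : ℕ), hi⟩ ≠ e ⟨(j : ℕ), hj⟩ := by
      intro h
      apply hij
      have h2 := e.injective h
      rw [Fin.mk.injEq] at h2
      exact Fin.ext h2
    obtain ⟨x, y, h1, h2⟩ := key_solve _ _ (e a) (e b) hrs
    exact ⟨(x, y), by simpa [rowFn, dif_pos hi] using h1,
      by simpa [rowFn, dif_pos hj] using h2⟩
  · -- i finite, j is the extra row: z.1 = e b, then solve for y
    refine ⟨(e b, e a - e ⟨(i : ℕ), hi⟩ * e b), ?_, ?_⟩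
    · simp [rowFn, dif_pos hi]
    · simp [rowFn, dif_neg hj]
  · refine ⟨(e a, e b - e ⟨(j : ℕ), hj⟩ * e a), ?_, ?_⟩
    · simp [rowFn, dif_neg hi]
    · simp [rowFn, dif_pos hj]
  · exfalso
    apply hij
    have h1 : (i : ℕ) = q := by omega
    have h2 : (j : ℕ) = q := by omega
    exact Fin.ext (h1.trans h2.symm)
end

section
/- For positive integers n, k with n ≥ k², the qualitative independence graph QI(n,k) has diameter at most 2: for any two vertices P, Q there exists a vertex R qualitatively independent from both P and Q. -/
/-!
Regard each element `x` as an edge of a bipartite multigraph joining the class of `P` containing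
`x` to the class of `Q` containing `x`; every vertex has degree at least `k`. Keep `k` elements
`A` of every class of `P` and `k` elements `B` of every class of `Q`, and pair `A \ B` with
`B \ A`: joining each element of `A` to the `Q`-class of its partner gives a `k`-regular
bipartite multigraph. By Hall's theorem it has a perfect matching, so (König) its edges split
into `k` perfect matchings. Colouring by matchings, every class of `P` and of `Q` sees all `k`
colours, and the colour classes form `R`: each meets the `k` disjoint classes of `P`, hence has
at least `k` elements.
-/

/-- Two partitions of `{1,…,n}` are qualitatively independent if every class of one
meets every class of the other. -/
def QIPart {n : ℕ} (P Q : Finpartition (Finset.univ : Finset (Fin n))) : Prop :=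
  ∀ A ∈ P.parts, ∀ B ∈ Q.parts, (A ∩ B).Nonempty

/-- Vertices of the qualitative independence graph `QI(n,k)`: `k`-partitions of an
`n`-set in which every class has size at least `k`. -/
def QIVertex (n k : ℕ) : Type :=
  {P : Finpartition (Finset.univ : Finset (Fin n)) //
    P.parts.card = k ∧ ∀ A ∈ P.parts, k ≤ A.card}

open Finset

namespace Finset

variable {E ι : Type*} [DecidableEq ι]

theorem card_filter_mem_eq_mul {s : Finset E} {φ : E → ι} {d : ℕ}
    (h : ∀ i, #{e ∈ s | φ e = i} = d) (A : Finset ι) : #{e ∈ s | φ e ∈ A} = #A * d := by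
  rw [card_eq_sum_card_fiberwise (s := {e ∈ s | φ e ∈ A}) (t := A) (f := φ)
    fun e he => (mem_filter.1 (mem_coe.1 he)).2, ← smul_eq_mul, ← sum_const]
  refine sum_congr rfl fun i hi => ?_
  rw [filter_filter, ← h i]
  congr 1
  exact filter_congr fun e _ => ⟨And.right, fun he => ⟨he ▸ hi, he⟩⟩

theorem card_eq_card_mul_of_card_filter_eq [Fintype ι] {s : Finset E} {φ : E → ι} {d : ℕ}
    (h : ∀ i, #{e ∈ s | φ e = i} = d) : #s = Fintype.card ι * d := by
  simpa using card_filter_mem_eq_mul h univ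

theorem card_filter_sdiff_of_subset [DecidableEq E] {s M : Finset E} (hMs : M ⊆ s)
    (P : E → Prop) [DecidablePred P] :
    #{e ∈ s \ M | P e} = #{e ∈ s | P e} - #{e ∈ M | P e} := by
  rw [← card_sdiff_of_subset (filter_subset_filter _ hMs)]
  congr 1
  ext e
  simp only [mem_filter, mem_sdiff]
  tauto

theorem exists_invOn_of_card_eq [DecidableEq E] {A B : Finset E} (h : #A = #B) :
    ∃ G H : E → E,
      Set.MapsTo G A B ∧ Set.MapsTo H B A ∧ Set.InvOn H G A B ∧ Set.EqOn H id A := by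
  obtain ⟨g, hg⟩ : ∃ g : A ≃ B, ∀ x : A, (x : E) ∈ B → (g x : E) = x :=
    Set.MapsTo.exists_equiv_extend_of_card_eq (s := {x : A | (x : E) ∈ B}) (by simpa using h)
      (fun _ hx => hx) Subtype.val_injective.injOn
  refine ⟨fun x => if hx : x ∈ A then g ⟨x, hx⟩ else x,
    fun y => if hy : y ∈ B then g.symm ⟨y, hy⟩ else y, fun x hx => ?_, fun y hy => ?_,
    ⟨fun x hx => ?_, fun y hy => ?_⟩, fun x hx => ?_⟩
  · simp [mem_coe.1 hx]
  · simp [mem_coe.1 hy]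
  · simp [mem_coe.1 hx]
  · simp [mem_coe.1 hy]
  · rw [mem_coe] at hx
    by_cases hxB : x ∈ B
    · have : g.symm ⟨x, hxB⟩ = ⟨x, hx⟩ :=
        g.symm_apply_eq.2 (Subtype.ext (hg ⟨x, hx⟩ hxB).symm)
      simp [hxB, this]
    · simp [hxB]

end Finset

section RegularMultigraph

variable {E ι κ : Type*} [DecidableEq ι] [DecidableEq κ]

theorem injOn_ite_of_card_le_one [DecidableEq E] {β : Type*} [DecidableEq β] {φ : E → β}
    {b : β} {s M : Finset E} {c : E → ℕ} {d : ℕ} (hM : #{e ∈ M | φ e = b} ≤ 1)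
    (hc : ∀ e ∈ s \ M, c e < d) (hinj : Set.InjOn c {e ∈ s \ M | φ e = b}) :
    Set.InjOn (fun e => if e ∈ M then d else c e) {e ∈ s | φ e = b} := by
  intro e he e' he' hee'
  simp only [Set.mem_ofPred_eq] at he he'
  by_cases heM : e ∈ M <;> by_cases he'M : e' ∈ M <;>
    simp only [heM, he'M, if_true, if_false] at hee'
  · exact card_le_one.1 hM e (mem_filter.2 ⟨heM, he.2⟩) e' (mem_filter.2 ⟨he'M, he'.2⟩)
  · exact absurd hee' (hc e' (mem_sdiff.2 ⟨he'.1, he'M⟩)).ne'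
  · exact absurd hee' (hc e (mem_sdiff.2 ⟨he.1, heM⟩)).ne
  · exact hinj (by simp [heM, he.1, he.2]) (by simp [he'M, he'.1, he'.2]) hee'

/-- `s` is the edge set of a `d`-regular bipartite multigraph in which the edge `e` joins
`l e` to `r e`. -/
def IsRegularMultigraph (l : E → ι) (r : E → κ) (s : Finset E) (d : ℕ) : Prop :=
  (∀ i, #{e ∈ s | l e = i} = d) ∧ ∀ j, #{e ∈ s | r e = j} = d

namespace IsRegularMultigraph

variable {l : E → ι} {r : E → κ} {s M : Finset E} {d : ℕ}

theorem symm (h : IsRegularMultigraph l r s d) : IsRegularMultigraph r l s d := ⟨h.2, h.1⟩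

theorem card_eq [Fintype ι] (h : IsRegularMultigraph l r s d) : #s = Fintype.card ι * d :=
  card_eq_card_mul_of_card_filter_eq h.1

variable [DecidableEq E]

theorem exists_perfectMatching [Fintype ι] [Fintype κ] (h : IsRegularMultigraph l r s d)
    (hd : 0 < d) : ∃ M ⊆ s, IsRegularMultigraph l r M 1 := by
  set N : ι → Finset κ := fun i => {e ∈ s | l e = i}.image r
  have hall : ∀ A : Finset ι, #A ≤ #(A.biUnion N) := by
    intro A
    refine Nat.le_of_mul_le_mul_right ?_ hd
    rw [← card_filter_mem_eq_mul h.1, ← card_filter_mem_eq_mul h.2]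
    refine card_le_card fun e he => ?_
    simp only [mem_filter, mem_biUnion, N, mem_image] at he ⊢
    exact ⟨he.1, l e, he.2, e, ⟨he.1, rfl⟩, rfl⟩
  obtain ⟨g, hg, hgN⟩ := (all_card_le_biUnion_card_iff_exists_injective N).1 hall
  choose m hm hmg using fun i => mem_image.1 (hgN i)
  simp only [mem_filter] at hm
  have hgbij : g.Bijective := (Fintype.bijective_iff_injective_and_card g).2
    ⟨hg, Nat.eq_of_mul_eq_mul_right hd (h.card_eq.symm.trans h.symm.card_eq)⟩
  refine ⟨univ.image m, image_subset_iff.2 fun i _ => (hm i).1, fun i => ?_, fun j => ?_⟩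
  · refine card_eq_one.2 ⟨m i, ?_⟩
    ext e
    simp only [mem_filter, mem_image, mem_univ, true_and, mem_singleton]
    constructor
    · rintro ⟨⟨i', rfl⟩, hi'⟩
      rw [← hi', (hm i').2]
    · rintro rfl
      exact ⟨⟨i, rfl⟩, (hm i).2⟩
  · obtain ⟨i, rfl⟩ := hgbij.2 j
    refine card_eq_one.2 ⟨m i, ?_⟩
    ext e
    simp only [mem_filter, mem_image, mem_univ, true_and, mem_singleton]
    constructor
    · rintro ⟨⟨i', rfl⟩, hi'⟩
      rw [hg ((hmg i').symm.trans hi')]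
    · rintro rfl
      exact ⟨⟨i, rfl⟩, hmg i⟩

theorem sdiff (h : IsRegularMultigraph l r s (d + 1)) (hMs : M ⊆ s)
    (hM : IsRegularMultigraph l r M 1) : IsRegularMultigraph l r (s \ M) d :=
  ⟨fun i => by rw [card_filter_sdiff_of_subset hMs, h.1, hM.1, Nat.add_sub_cancel],
    fun j => by rw [card_filter_sdiff_of_subset hMs, h.2, hM.2, Nat.add_sub_cancel]⟩

/-- König's edge-colouring theorem for regular bipartite multigraphs: peel off perfect
matchings one colour at a time. -/
theorem exists_edgeColoring [Fintype ι] [Fintype κ] (h : IsRegularMultigraph l r s d) :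
    ∃ c : E → ℕ, (∀ e ∈ s, c e < d) ∧ (∀ i, Set.InjOn c {e ∈ s | l e = i}) ∧
      ∀ j, Set.InjOn c {e ∈ s | r e = j} := by
  induction d generalizing s with
  | zero =>
    have hs : s = ∅ := eq_empty_of_forall_notMem fun e he => by
      have hfib := h.1 (l e)
      rw [card_eq_zero, filter_eq_empty_iff] at hfib
      exact hfib he rfl
    subst hs
    exact ⟨0, by simp, by simp, by simp⟩
  | succ d ih =>
    obtain ⟨M, hMs, hM⟩ := h.exists_perfectMatching d.succ_pos
    obtain ⟨c, hc, hcl, hcr⟩ := ih (h.sdiff hMs hM)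
    refine ⟨fun e => if e ∈ M then d else c e, fun e he => ?_,
      fun i => injOn_ite_of_card_le_one (hM.1 i).le hc (hcl i),
      fun j => injOn_ite_of_card_le_one (hM.2 j).le hc (hcr j)⟩
    by_cases heM : e ∈ M
    · simp [heM]
    · simpa [heM] using (hc e (mem_sdiff.2 ⟨he, heM⟩)).trans d.lt_succ_self

end IsRegularMultigraph

end RegularMultigraph

section RainbowColoring

variable {α ι κ : Type*} [Fintype α] [DecidableEq α] [DecidableEq ι] [DecidableEq κ]

theorem exists_finset_card_filter_eq (p : α → ι) {d : ℕ} (h : ∀ i, d ≤ #{x | p x = i}) :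
    ∃ A : Finset α, ∀ i, #{x ∈ A | p x = i} = d := by
  choose A hAp hAcard using fun i => exists_subset_card_eq (h i)
  have hpA {i x} (hx : x ∈ A i) : p x = i := (mem_filter.1 (hAp i hx)).2
  refine ⟨({x | x ∈ A (p x)} : Finset α), fun i => ?_⟩
  rw [← hAcard i]
  congr 1
  ext x
  simp only [mem_filter, mem_univ, true_and]
  exact ⟨fun ⟨hx, hxi⟩ => hxi ▸ hx, fun hx => ⟨(hpA hx).symm ▸ hx, hpA hx⟩⟩

variable [Fintype ι] [Fintype κ]

theorem exists_coloring_surjOn_fibers (p : α → ι) (q : α → κ)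
    (hικ : Fintype.card ι = Fintype.card κ) {d : ℕ} (hd : 0 < d)
    (hp : ∀ i, d ≤ #{x | p x = i}) (hq : ∀ j, d ≤ #{x | q x = j}) :
    ∃ f : α → ℕ, (∀ x, f x < d) ∧ (∀ i, Set.SurjOn f (p ⁻¹' {i}) (Set.Iio d)) ∧
      ∀ j, Set.SurjOn f (q ⁻¹' {j}) (Set.Iio d) := by
  obtain ⟨A, hA⟩ := exists_finset_card_filter_eq p hp
  obtain ⟨B, hB⟩ := exists_finset_card_filter_eq q hq
  obtain ⟨G, H, hG, hH, hinv, hHA⟩ := exists_invOn_of_card_eq (A := A) (B := B) (by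
    rw [card_eq_card_mul_of_card_filter_eq hA, card_eq_card_mul_of_card_filter_eq hB, hικ])
  have hreg : IsRegularMultigraph p (q ∘ G) A d := by
    refine ⟨hA, fun j => hB j ▸ card_nbij' G H (fun x hx => ?_) (fun y hy => ?_)
      (hinv.1.mono (coe_subset.2 (filter_subset _ _)))
      (hinv.2.mono (coe_subset.2 (filter_subset _ _)))⟩
    · simp only [coe_filter, Set.mem_ofPred_eq, Function.comp_apply] at hx ⊢
      exact ⟨hG hx.1, hx.2⟩
    · simp only [coe_filter, Set.mem_ofPred_eq, Function.comp_apply] at hy ⊢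
      exact ⟨hH hy.1, by rw [hinv.2 hy.1, hy.2]⟩
  obtain ⟨c, hc, hcp, hcq⟩ := hreg.exists_edgeColoring
  have hsurj {s : Finset α} (hsA : s ⊆ A) (hs : #s = d) (hinj : Set.InjOn c s) :
      Set.SurjOn c s (Set.Iio d) := by
    simpa using surjOn_of_injOn_of_card_le (t := range d) c
      (fun x hx => by simpa using hc x (hsA hx)) hinj (by simp [hs])
  -- `y` takes the colour of the edge it lies on: `y` itself, or `H y` when `y ∈ B \ A`.
  refine ⟨fun y => if H y ∈ A then c (H y) else 0, fun y => ?_, fun i u hu => ?_,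
    fun j u hu => ?_⟩
  · dsimp only
    split_ifs with hy
    exacts [hc _ hy, hd]
  · obtain ⟨x, hx, rfl⟩ :=
      hsurj (filter_subset _ _) (hA i) (by rw [coe_filter]; exact hcp i) hu
    obtain ⟨hxA, hxi⟩ := mem_filter.1 hx
    exact ⟨x, hxi, by simp [hHA hxA, hxA]⟩
  · obtain ⟨x, hx, rfl⟩ :=
      hsurj (filter_subset _ _) (hreg.2 j) (by rw [coe_filter]; exact hcq j) hu
    obtain ⟨hxA, hxj⟩ := mem_filter.1 hx
    exact ⟨G x, hxj, by simp [hinv.1 hxA, hxA]⟩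

end RainbowColoring

namespace Finpartition

section

variable {α : Type*} [DecidableEq α] {s : Finset α} (P : Finpartition s)

theorem card_parts_le_card_of_forall_inter_nonempty {C : Finset α}
    (h : ∀ A ∈ P.parts, (C ∩ A).Nonempty) : #P.parts ≤ #C := by
  refine (card_le_card fun A hA => ?_).trans (card_image_le (f := P.part) (s := C))
  obtain ⟨x, hx⟩ := h A hA
  rw [mem_inter] at hx
  exact mem_image.2 ⟨x, hx.1, P.part_eq_of_mem hA hx.2⟩

end

variable {α : Type*} [Fintype α] [DecidableEq α]

def partIndex (P : Finpartition (univ : Finset α)) (x : α) : P.parts :=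
  ⟨P.part x, P.part_mem.2 (mem_univ x)⟩

theorem partIndex_eq_iff (P : Finpartition (univ : Finset α)) {A : P.parts} {x : α} :
    P.partIndex x = A ↔ x ∈ A.1 := by
  rw [partIndex, Subtype.ext_iff, P.part_eq_iff_mem A.2]

theorem card_filter_partIndex_eq (P : Finpartition (univ : Finset α)) (A : P.parts) :
    #{x | P.partIndex x = A} = #A.1 := by
  congr 1
  ext x
  simp [partIndex_eq_iff]

variable {β : Type*} {f : α → β} [DecidableRel (Setoid.ker f)]

theorem mem_parts_ofSetoid_ker {C : Finset α} :
    C ∈ (ofSetoid (Setoid.ker f)).parts ↔ ∃ y, ∀ x, x ∈ C ↔ f x = f y := by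
  simp [ofSetoid, ofSetSetoid_parts, Setoid.ker_def, Finset.ext_iff, eq_comm]

theorem card_parts_ofSetoid_ker {t : Finset β} (ht : Set.range f = t) :
    #(ofSetoid (Setoid.ker f)).parts = #t := by
  classical
  have hmem {b} : b ∈ t ↔ ∃ y, f y = b := by rw [← mem_coe, ← ht, Set.mem_range]
  have : (ofSetoid (Setoid.ker f)).parts = t.image fun b => ({x | f x = b} : Finset α) := by
    ext C
    simp only [mem_parts_ofSetoid_ker, mem_image, hmem, Finset.ext_iff, mem_filter, mem_univ,
      true_and]
    constructor
    · rintro ⟨y, hy⟩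
      exact ⟨f y, ⟨y, rfl⟩, fun x => (hy x).symm⟩
    · rintro ⟨_, ⟨y, rfl⟩, hy⟩
      exact ⟨y, fun x => (hy x).symm⟩
  rw [this, card_image_of_injOn]
  intro b hb b' _ hbb'
  obtain ⟨a, rfl⟩ := hmem.1 hb
  simpa using congrArg (a ∈ ·) hbb'

end Finpartition

theorem qiPart_ofSetoid_ker {n : ℕ} {β : Type*} {f : Fin n → β} [DecidableRel (Setoid.ker f)]
    {P : Finpartition (univ : Finset (Fin n))}
    (hP : ∀ A, Set.SurjOn f (P.partIndex ⁻¹' {A}) (Set.range f)) :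
    QIPart (Finpartition.ofSetoid (Setoid.ker f)) P := by
  intro C hC A hA
  obtain ⟨y, hy⟩ := Finpartition.mem_parts_ofSetoid_ker.1 hC
  obtain ⟨x, hxA, hxy⟩ := hP ⟨A, hA⟩ ⟨y, rfl⟩
  exact ⟨x, mem_inter.2 ⟨(hy x).2 hxy, P.partIndex_eq_iff.1 hxA⟩⟩

theorem QIGraph_diameter_le_two_general (n k : ℕ) (hk : 0 < k)
    (P Q : QIVertex n k) :
    ∃ R : QIVertex n k, QIPart R.1 P.1 ∧ QIPart R.1 Q.1 := by
  classical
  obtain ⟨P, hPcard, hPsize⟩ := P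
  obtain ⟨Q, hQcard, hQsize⟩ := Q
  obtain ⟨f, hfk, hfP, hfQ⟩ := exists_coloring_surjOn_fibers P.partIndex Q.partIndex
    (by simp [hPcard, hQcard]) hk
    (fun A => (P.card_filter_partIndex_eq A).symm ▸ hPsize A.1 A.2)
    (fun B => (Q.card_filter_partIndex_eq B).symm ▸ hQsize B.1 B.2)
  have hrange : Set.range f ⊆ Set.Iio k := Set.range_subset_iff.2 hfk
  have hRP : QIPart (Finpartition.ofSetoid (Setoid.ker f)) P :=
    qiPart_ofSetoid_ker fun A => (hfP A).mono subset_rfl hrange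
  refine ⟨⟨Finpartition.ofSetoid (Setoid.ker f), ?_, fun C hC => ?_⟩, hRP,
    qiPart_ofSetoid_ker fun B => (hfQ B).mono subset_rfl hrange⟩
  · obtain ⟨A, hA⟩ := card_pos.1 (hPcard ▸ hk)
    refine (Finpartition.card_parts_ofSetoid_ker (Set.Subset.antisymm ?_ ?_)).trans (card_range k)
    · simpa using hrange
    · intro u hu
      obtain ⟨x, -, rfl⟩ := hfP ⟨A, hA⟩ (by simpa using hu)
      exact ⟨x, rfl⟩
  · exact hPcard ▸ P.card_parts_le_card_of_forall_inter_nonempty (hRP C hC)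

/-- For `n ≥ k²`, the qualitative independence graph `QI(n,k)` has diameter at
most 2: for any two vertices `P, Q` there is a vertex `R` qualitatively
independent from both. -/
theorem QIGraph_diameter_le_two (n k : ℕ) (hk : 0 < k) (hn : k ^ 2 ≤ n)
    (P Q : QIVertex n k) :
    ∃ R : QIVertex n k, QIPart R.1 P.1 ∧ QIPart R.1 Q.1 :=
  QIGraph_diameter_le_two_general n k hk P Q
end

section
/- If 𝒜 is a family of pairwise qualitatively independent subsets of an n-set, then |𝒜| ≤ C(n−1, ⌊n/2⌋ − 1), and this bound is attained by the family of all ⌊n/2⌋-subsets containing a fixed element. -/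
open Finset FinsetFamily

/-- Two subsets of `{1,…,n}` are qualitatively independent if all four of
`A∩B`, `A∩Bᶜ`, `Aᶜ∩B`, `Aᶜ∩Bᶜ` are nonempty. -/
def QISets {n : ℕ} (A B : Finset (Fin n)) : Prop :=
  (A ∩ B).Nonempty ∧ (A ∩ Bᶜ).Nonempty ∧ (Aᶜ ∩ B).Nonempty ∧ (Aᶜ ∩ Bᶜ).Nonempty

/-- Local LYM for the upper shadow: below the middle layer the upper shadow is
at least as large as the family itself. -/
lemma qisets_upLYM {n s : ℕ} (hs : 2 * s < n) {F : Finset (Finset (Fin n))}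
    (hF : (F : Set (Finset (Fin n))).Sized s) : F.card ≤ (∂⁺ F).card := by
  have hsz : ((Fᶜˢ : Finset (Finset (Fin n))) : Set (Finset (Fin n))).Sized (n - s) := by
    simpa using hF.compls
  have h := Finset.card_mul_le_card_shadow_mul hsz
  rw [Finset.shadow_compls, Finset.card_compls, Finset.card_compls, Fintype.card_fin] at h
  have h' : F.card * (n - s) ≤ (∂⁺ F).card * (s + 1) := by
    have he : n - (n - s) + 1 = s + 1 := by omega
    rwa [he] at h
  have h'' : (∂⁺ F).card * (s + 1) ≤ (∂⁺ F).card * (n - s) :=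
    Nat.mul_le_mul_left _ (by omega)
  exact Nat.le_of_mul_le_mul_right (h'.trans h'') (by omega)

/-- An intersecting antichain of sets of size at most `k ≤ n/2` has at most
`C(n-1, k-1)` members. -/
lemma qisets_key {n k : ℕ} (hk2 : 2 * k ≤ n) (hk1 : 1 ≤ k) :
    ∀ d (ℬ : Finset (Finset (Fin n))),
      (↑ℬ : Set (Finset (Fin n))).Intersecting →
      IsAntichain (· ⊆ ·) (↑ℬ : Set (Finset (Fin n))) →
      (∀ B ∈ ℬ, k - d ≤ B.card ∧ B.card ≤ k) →
      ℬ.card ≤ (n - 1).choose (k - 1) := by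
  intro d
  induction d with
  | zero =>
    intro ℬ hint _ hcard
    refine Finset.erdos_ko_rado hint (fun B hB => ?_) (by omega)
    have h := hcard B (Finset.mem_coe.1 hB)
    omega
  | succ d ih =>
    intro ℬ hint hanti hcard
    by_cases hd : k ≤ d
    · exact ih ℬ hint hanti fun B hB => ⟨by have := (hcard B hB).1; omega, (hcard B hB).2⟩
    push_neg at hd
    set s := k - d - 1 with hs
    set Fs := ℬ.filter (fun B => B.card = s) with hFsdef
    have hFs_sized : ((Fs : Finset (Finset (Fin n))) : Set (Finset (Fin n))).Sized s :=
      fun B hB => (Finset.mem_filter.1 hB).2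
    have hup : Fs.card ≤ (∂⁺ Fs).card := qisets_upLYM (by omega) hFs_sized
    set ℬ' := (ℬ \ Fs) ∪ ∂⁺ Fs with hB'def
    have hsubset : ∀ x ∈ ℬ', ∃ y ∈ ℬ, y ⊆ x := by
      intro x hx
      rcases Finset.mem_union.1 hx with h | h
      · exact ⟨x, (Finset.mem_sdiff.1 h).1, Finset.Subset.refl x⟩
      · obtain ⟨y, hy, hyx⟩ := Finset.exists_subset_of_mem_upShadow h
        exact ⟨y, (Finset.mem_filter.1 hy).1, hyx⟩
    have hcard' : ∀ x ∈ ℬ', s + 1 ≤ x.card ∧ x.card ≤ k := by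
      intro x hx
      rcases Finset.mem_union.1 hx with h | h
      · have h1 := Finset.mem_sdiff.1 h
        have h2 := hcard x h1.1
        have h3 : x.card ≠ s := fun hc => h1.2 (Finset.mem_filter.2 ⟨h1.1, hc⟩)
        omega
      · have := hFs_sized.upShadow (Finset.mem_coe.2 h)
        omega
    have hint' : (↑ℬ' : Set (Finset (Fin n))).Intersecting := by
      intro x hx y hy hdis
      obtain ⟨x0, hx0, hx0x⟩ := hsubset x (Finset.mem_coe.1 hx)
      obtain ⟨y0, hy0, hy0y⟩ := hsubset y (Finset.mem_coe.1 hy)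
      exact hint (Finset.mem_coe.2 hx0) (Finset.mem_coe.2 hy0) (hdis.mono hx0x hy0y)
    have hanti' : IsAntichain (· ⊆ ·) (↑ℬ' : Set (Finset (Fin n))) := by
      intro x hx y hy hxy hxsuby
      rcases Finset.mem_union.1 (Finset.mem_coe.1 hy) with h | h
      · have hyB := (Finset.mem_sdiff.1 h).1
        rcases Finset.mem_union.1 (Finset.mem_coe.1 hx) with h2 | h2
        · exact hanti (Finset.mem_coe.2 (Finset.mem_sdiff.1 h2).1)
            (Finset.mem_coe.2 hyB) hxy hxsuby
        · obtain ⟨x0, hx0, hx0x⟩ := Finset.exists_subset_of_mem_upShadow h2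
          have hx0B : x0 ∈ ℬ := (Finset.mem_filter.1 hx0).1
          have hne : x0 ≠ y := by
            have hc1 : x0.card = s := (Finset.mem_filter.1 hx0).2
            have hc2 := (hcard' y (Finset.mem_coe.1 hy)).1
            intro he; rw [he] at hc1; omega
          exact hanti (Finset.mem_coe.2 hx0B) (Finset.mem_coe.2 hyB) hne
            (hx0x.trans hxsuby)
      · have hy1 : y.card = s + 1 := hFs_sized.upShadow (Finset.mem_coe.2 h)
        have hx1 := (hcard' x (Finset.mem_coe.1 hx)).1
        exact hxy (Finset.eq_of_subset_of_card_le hxsuby (by omega))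
    have hdisj : Disjoint (ℬ \ Fs) (∂⁺ Fs) := by
      rw [Finset.disjoint_right]
      intro y hyup hysd
      obtain ⟨x0, hx0, hx0y⟩ := Finset.exists_subset_of_mem_upShadow hyup
      have hyc : y.card = s + 1 := hFs_sized.upShadow (Finset.mem_coe.2 hyup)
      have hxc : x0.card = s := (Finset.mem_filter.1 hx0).2
      refine hanti (Finset.mem_coe.2 (Finset.mem_filter.1 hx0).1)
        (Finset.mem_coe.2 (Finset.mem_sdiff.1 hysd).1) ?_ hx0y
      intro he; rw [he] at hxc; omega
    have hsize : ℬ.card ≤ ℬ'.card := by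
      rw [hB'def, Finset.card_union_of_disjoint hdisj]
      have h1 : (ℬ \ Fs).card = ℬ.card - Fs.card :=
        Finset.card_sdiff_of_subset (Finset.filter_subset _ _)
      have h2 : Fs.card ≤ ℬ.card := Finset.card_filter_le _ _
      omega
    calc ℬ.card ≤ ℬ'.card := hsize
      _ ≤ (n - 1).choose (k - 1) := ih ℬ' hint' hanti' fun B hB => by
          have := hcard' B hB; omega

/-- A family of pairwise qualitatively independent subsets of an `n`-set has
cardinality at most `C(n−1, ⌊n/2⌋−1)`, and this bound is attained by the family
of all `⌊n/2⌋`-subsets containing a fixed element. -/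
theorem qisets_family_bound (n : ℕ) (hn : 4 ≤ n) :
    (∀ 𝒜 : Finset (Finset (Fin n)),
        (∀ A ∈ 𝒜, ∀ B ∈ 𝒜, A ≠ B → QISets A B) →
        𝒜.card ≤ (n - 1).choose (n / 2 - 1)) ∧
    (∀ A ∈ Finset.univ.filter
        (fun A : Finset (Fin n) => A.card = n / 2 ∧ (⟨0, by omega⟩ : Fin n) ∈ A),
      ∀ B ∈ Finset.univ.filter
        (fun A : Finset (Fin n) => A.card = n / 2 ∧ (⟨0, by omega⟩ : Fin n) ∈ A),
      A ≠ B → QISets A B) ∧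
    (Finset.univ.filter
        (fun A : Finset (Fin n) => A.card = n / 2 ∧ (⟨0, by omega⟩ : Fin n) ∈ A)).card =
      (n - 1).choose (n / 2 - 1) := by
  refine ⟨?_, ?_, ?_⟩
  · -- upper bound
    intro 𝒜 hQI
    by_cases hA1 : 𝒜.card ≤ 1
    · have h1 : 0 < (n - 1).choose (n / 2 - 1) := Nat.choose_pos (by omega)
      omega
    push_neg at hA1
    have hne : ∀ A ∈ 𝒜, A.Nonempty ∧ Aᶜ.Nonempty := by
      intro A hA
      obtain ⟨B, hB, hBA⟩ := Finset.exists_mem_ne hA1 A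
      obtain ⟨h1, h2, h3, h4⟩ := hQI A hA B hB (Ne.symm hBA)
      exact ⟨h1.mono Finset.inter_subset_left, h3.mono Finset.inter_subset_left⟩
    classical
    set f : Finset (Fin n) → Finset (Fin n) := fun A => if 2 * A.card ≤ n then A else Aᶜ
      with hf
    set ℬ := 𝒜.image f with hBdef
    have hfmem : ∀ A, f A = A ∨ f A = Aᶜ := by
      intro A; rw [hf]; dsimp only; split_ifs <;> simp
    have hinter : ∀ A ∈ 𝒜, ∀ B ∈ 𝒜, (f A ∩ f B).Nonempty := by
      intro A hA B hB
      by_cases hAB : A = B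
      · subst hAB
        rcases hfmem A with h | h <;> rw [h, Finset.inter_self]
        · exact (hne A hA).1
        · exact (hne A hA).2
      · obtain ⟨h1, h2, h3, h4⟩ := hQI A hA B hB hAB
        rcases hfmem A with ha | ha <;> rcases hfmem B with hb | hb <;>
          rw [ha, hb] <;> assumption
    have hcard_eq : ℬ.card = 𝒜.card := by
      rw [hBdef]
      apply Finset.card_image_of_injOn
      intro A hA B hB hfe
      by_contra hne'
      obtain ⟨h1, h2, h3, h4⟩ := hQI A hA B hB hne'
      rw [hf] at hfe; dsimp only at hfe
      split_ifs at hfe with hA2 hB2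
      · exact hne' hfe
      · obtain ⟨x, hx⟩ := h1
        rw [Finset.mem_inter] at hx
        rw [hfe, Finset.mem_compl] at hx
        exact hx.1 hx.2
      · obtain ⟨x, hx⟩ := h1
        rw [Finset.mem_inter] at hx
        rw [← hfe, Finset.mem_compl] at hx
        exact hx.2 hx.1
      · exact hne' (compl_inj_iff.1 hfe)
    have hint : (↑ℬ : Set (Finset (Fin n))).Intersecting := by
      intro x hx y hy hdis
      obtain ⟨A, hA, rfl⟩ := Finset.mem_image.1 (Finset.mem_coe.1 hx)
      obtain ⟨B, hB, rfl⟩ := Finset.mem_image.1 (Finset.mem_coe.1 hy)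
      obtain ⟨t, ht⟩ := hinter A hA B hB
      rw [Finset.mem_inter] at ht
      exact Finset.disjoint_left.1 hdis ht.1 ht.2
    have hanti : IsAntichain (· ⊆ ·) (↑ℬ : Set (Finset (Fin n))) := by
      intro x hx y hy hxy hsub
      obtain ⟨A, hA, rfl⟩ := Finset.mem_image.1 (Finset.mem_coe.1 hx)
      obtain ⟨B, hB, rfl⟩ := Finset.mem_image.1 (Finset.mem_coe.1 hy)
      have hAB : A ≠ B := fun h => hxy (by rw [h])
      obtain ⟨h1, h2, h3, h4⟩ := hQI A hA B hB hAB
      rcases hfmem A with ha | ha <;> rcases hfmem B with hb | hb <;>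
          rw [ha, hb] at hsub
      · obtain ⟨t, ht⟩ := h2
        rw [Finset.mem_inter, Finset.mem_compl] at ht
        exact ht.2 (hsub ht.1)
      · obtain ⟨t, ht⟩ := h1
        rw [Finset.mem_inter] at ht
        exact Finset.mem_compl.1 (hsub ht.1) ht.2
      · obtain ⟨t, ht⟩ := h4
        rw [Finset.mem_inter, Finset.mem_compl, Finset.mem_compl] at ht
        exact ht.2 (hsub (Finset.mem_compl.2 ht.1))
      · obtain ⟨t, ht⟩ := h3
        rw [Finset.mem_inter, Finset.mem_compl] at ht
        exact Finset.mem_compl.1 (hsub (Finset.mem_compl.2 ht.1)) ht.2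
    have hsized : ∀ B ∈ ℬ, n / 2 - n / 2 ≤ B.card ∧ B.card ≤ n / 2 := by
      intro x hx
      obtain ⟨A, hA, rfl⟩ := Finset.mem_image.1 hx
      refine ⟨by omega, ?_⟩
      rw [hf]; dsimp only
      split_ifs with h
      · omega
      · rw [Finset.card_compl, Fintype.card_fin]; omega
    have := qisets_key (n := n) (k := n / 2) (by omega) (by omega) (n / 2) ℬ hint hanti hsized
    omega
  · -- extremal family is pairwise QI
    intro A hA B hB hAB
    rw [Finset.mem_filter] at hA hB
    obtain ⟨-, hAc, hA0⟩ := hA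
    obtain ⟨-, hBc, hB0⟩ := hB
    refine ⟨⟨_, Finset.mem_inter.2 ⟨hA0, hB0⟩⟩, ?_, ?_, ?_⟩
    · by_contra h
      rw [Finset.not_nonempty_iff_eq_empty] at h
      have hsub : A ⊆ B := fun x hx => by
        by_contra hxB
        exact Finset.notMem_empty x (h ▸ Finset.mem_inter.2 ⟨hx, Finset.mem_compl.2 hxB⟩)
      exact hAB (Finset.eq_of_subset_of_card_le hsub (by omega))
    · by_contra h
      rw [Finset.not_nonempty_iff_eq_empty] at h
      have hsub : B ⊆ A := fun x hx => by
        by_contra hxA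
        exact Finset.notMem_empty x (h ▸ Finset.mem_inter.2 ⟨Finset.mem_compl.2 hxA, hx⟩)
      exact hAB (Finset.eq_of_subset_of_card_le hsub (by omega)).symm
    · rw [← Finset.compl_union]
      have hiu : (A ∪ B).card < n := by
        have h1 : (A ∪ B).card + (A ∩ B).card = A.card + B.card :=
          Finset.card_union_add_card_inter A B
        have h2 : 0 < (A ∩ B).card :=
          Finset.card_pos.2 ⟨_, Finset.mem_inter.2 ⟨hA0, hB0⟩⟩
        omega
      rw [← Finset.card_pos, Finset.card_compl, Fintype.card_fin]
      omega
  · -- cardinality of the extremal family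
    set z : Fin n := ⟨0, by omega⟩ with hz
    rw [Finset.card_bij (fun A _ => A.erase z) ?_ ?_ ?_
      (t := (Finset.univ.erase z).powersetCard (n / 2 - 1))]
    · rw [Finset.card_powersetCard, Finset.card_erase_of_mem (Finset.mem_univ z),
        Finset.card_univ, Fintype.card_fin]
    · intro A hA
      rw [Finset.mem_filter] at hA
      rw [Finset.mem_powersetCard]
      exact ⟨Finset.erase_subset_erase z (Finset.subset_univ A),
        by rw [Finset.card_erase_of_mem hA.2.2, hA.2.1]⟩
    · intro A hA B hB he
      rw [Finset.mem_filter] at hA hB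
      have he' : A.erase z = B.erase z := he
      rw [← Finset.insert_erase hA.2.2, ← Finset.insert_erase hB.2.2, he']
    · intro B hB
      rw [Finset.mem_powersetCard] at hB
      have hzB : z ∉ B := fun h => (Finset.mem_erase.1 (hB.1 h)).1 rfl
      refine ⟨insert z B, ?_, Finset.erase_insert hzB⟩
      rw [Finset.mem_filter]
      refine ⟨Finset.mem_univ _, ?_, Finset.mem_insert_self z B⟩
      rw [Finset.card_insert_of_notMem hzB, hB.2]
      omega
end

section
/- For every positive integer r, the minimum number of columns in a binary covering array with r rows is CAN(r,2) = min{ n : C(n−1, ⌊n/2⌋ − 1) ≥ r }. -/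
/-!
Each row of a binary covering array has a level set with at most `⌊n/2⌋` elements, and for
two rows any choice of level sets intersect and are incomparable: the rows give an intersecting
antichain of `r` sets of size at most `⌊n/2⌋`. Passing to complements, the LYM shadow bound
shows that the `⌊n/2⌋`-sets containing a member of such an antichain are at least as many as
its members; they again form an intersecting family, so Erdős–Ko–Rado gives
`r ≤ C(n-1, ⌊n/2⌋-1)`. Conversely the star of `⌊n/2⌋`-sets through a fixed point attains this:
two of its members meet in that point, are incomparable, and do not cover the ground set.
-/

open Finset FinsetFamily

namespace Finset

variable {α : Type*} [DecidableEq α] [Fintype α] {𝒜 : Finset (Finset α)}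

theorem IsAntichain.card_filter_le_card_falling (h𝒜 : IsAntichain (· ⊆ ·) (𝒜 : Set (Finset α)))
    {j : ℕ} (hj : Fintype.card α ≤ 2 * j) : #{s ∈ 𝒜 | j ≤ #s} ≤ #(falling j 𝒜) := by
  induction hd : Fintype.card α + 1 - j generalizing j with
  | zero =>
    rw [filter_false_of_mem fun s _ ↦ by have := card_le_univ s; omega, card_empty]
    exact Nat.zero_le _
  | succ d ih =>
    have hfalling := ih (j := j + 1) (by omega) (by omega)
    -- local LYM, with layer `j + 1` above the middle
    have hshadow : #(falling (j + 1) 𝒜) ≤ #(∂ (falling (j + 1) 𝒜)) := by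
      have := local_lubell_yamamoto_meshalkin_inequality_mul (sized_falling (j + 1) 𝒜)
      exact Nat.le_of_mul_le_mul_right
        (this.trans (Nat.mul_le_mul_left _ (by omega))) (Nat.succ_pos j)
    have hsplit : #{s ∈ 𝒜 | j ≤ #s} ≤ #(𝒜 # j) + #{s ∈ 𝒜 | j + 1 ≤ #s} := by
      refine (card_le_card fun s hs ↦ ?_).trans (card_union_le _ _)
      simp only [mem_filter, mem_union, mem_slice] at hs ⊢
      grind
    rw [← slice_union_shadow_falling_succ, card_union_of_disjoint h𝒜.disjoint_slice_shadow_falling]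
    omega

theorem IsAntichain.card_le_card_falling (h𝒜 : IsAntichain (· ⊆ ·) (𝒜 : Set (Finset α)))
    {m : ℕ} (hm : Fintype.card α ≤ 2 * m) (h𝒜m : ∀ s ∈ 𝒜, m ≤ #s) :
    #𝒜 ≤ #(falling m 𝒜) := by
  simpa [filter_true_of_mem h𝒜m] using h𝒜.card_filter_le_card_falling hm

end Finset

theorem erdos_ko_rado_of_isAntichain {n k : ℕ} {𝒜 : Finset (Finset (Fin n))}
    (h𝒜 : (𝒜 : Set (Finset (Fin n))).Intersecting)
    (h𝒜' : IsAntichain (· ⊆ ·) (𝒜 : Set (Finset (Fin n))))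
    (hk : 2 * k ≤ n) (h𝒜k : ∀ s ∈ 𝒜, #s ≤ k) :
    #𝒜 ≤ (n - 1).choose (k - 1) := by
  set 𝒰 := (falling (n - k) 𝒜ᶜˢ)ᶜˢ
  have hcompl : IsAntichain (· ⊆ ·) (𝒜ᶜˢ : Set (Finset (Fin n))) := by
    rw [coe_compls]; exact h𝒜'.image_compl
  have hcard : #𝒜 ≤ #𝒰 := by
    rw [card_compls, ← card_compls 𝒜]
    refine hcompl.card_le_card_falling (by rw [Fintype.card_fin]; omega) fun s hs ↦ ?_
    have := h𝒜k _ (mem_compls.1 hs)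
    have := card_add_card_compl s
    rw [Fintype.card_fin] at this
    omega
  have hsized : (𝒰 : Set (Finset (Fin n))).Sized k := by
    intro s hs
    have := sized_falling _ _ (mem_compls.1 hs)
    have := card_add_card_compl s
    rw [Fintype.card_fin] at this
    omega
  have hinter : (𝒰 : Set (Finset (Fin n))).Intersecting := by
    have hsup : ∀ s ∈ 𝒰, ∃ t ∈ 𝒜, t ⊆ s := by
      intro s hs
      obtain ⟨⟨t, ht, hst⟩, -⟩ := mem_falling.1 (mem_compls.1 hs)
      exact ⟨tᶜ, mem_compls.1 ht, compl_le_iff_compl_le.1 hst⟩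
    intro s hs s' hs'
    obtain ⟨t, ht, hts⟩ := hsup s hs
    obtain ⟨t', ht', hts'⟩ := hsup s' hs'
    exact fun hdisj ↦ h𝒜 ht ht' (hdisj.mono hts hts')
  exact hcard.trans (erdos_ko_rado hinter hsized (by omega))

namespace QIVec

variable {n k : ℕ} {u v : Fin n → Fin k}

theorem not_disjoint (h : QIVec u v) (a b : Fin k) :
    ¬Disjoint ({x | u x = a} : Finset (Fin n)) ({x | v x = b} : Finset (Fin n)) := by
  obtain ⟨x, hu, hv⟩ := h a b
  exact not_disjoint_iff.2 ⟨x, by simpa using hu, by simpa using hv⟩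

theorem not_subset (h : QIVec u v) (a : Fin k) {b b' : Fin k} (hb : b' ≠ b) :
    ¬({x | u x = a} : Finset (Fin n)) ⊆ ({x | v x = b} : Finset (Fin n)) := by
  obtain ⟨x, hu, hv⟩ := h a b'
  exact fun hsub ↦ hb (hv ▸ (mem_filter.1 (hsub (by simpa using hu))).2)

end QIVec

theorem exists_two_mul_card_fiber_le {n : ℕ} (u : Fin n → Fin 2) :
    ∃ a, 2 * #({x | u x = a} : Finset (Fin n)) ≤ n := by
  have h := card_eq_sum_card_fiberwise (f := u) (s := univ) (t := univ) (fun _ _ ↦ mem_univ _)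
  rw [Fin.sum_univ_two, card_univ, Fintype.card_fin] at h
  by_contra! hlt
  have := hlt 0
  have := hlt 1
  omega

theorem le_choose_of_pairwise_qivec {n r : ℕ} (hr : 2 ≤ r) {C : Fin r → Fin n → Fin 2}
    (hC : Pairwise fun i j ↦ QIVec (C i) (C j)) : r ≤ (n - 1).choose (n / 2 - 1) := by
  choose a ha using fun i ↦ exists_two_mul_card_fiber_le (C i)
  set B : Fin r → Finset (Fin n) := fun i ↦ {x | C i x = a i}
  have hsub : Pairwise fun i j ↦ ¬B i ⊆ B j := fun i j hij ↦
    (hC hij).not_subset (a i) (b' := a j + 1) (by simp)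
  have hinj : B.Injective := fun i j hij ↦ by_contra fun hne ↦ hsub hne hij.le
  have hinter : (Set.range B).Intersecting := by
    rintro _ ⟨i, rfl⟩ _ ⟨j, rfl⟩
    rcases eq_or_ne i j with rfl | hij
    · have : Nontrivial (Fin r) := Fin.nontrivial_iff_two_le.2 hr
      obtain ⟨l, hli⟩ := exists_ne i
      exact fun h ↦ (hC hli.symm).not_disjoint (a i) (a l)
        (disjoint_self.1 h ▸ disjoint_bot_left : Disjoint (B i) (B l))
    · exact (hC hij).not_disjoint (a i) (a j)
  have hanti : IsAntichain (· ⊆ ·) (Set.range B) := by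
    rintro _ ⟨i, rfl⟩ _ ⟨j, rfl⟩ hne
    exact hsub (ne_of_apply_ne B hne)
  have hrange : ((univ.image B : Finset _) : Set (Finset (Fin n))) = Set.range B := by simp
  calc r = #(univ.image B) := by rw [card_image_of_injective _ hinj, card_fin]
    _ ≤ (n - 1).choose (n / 2 - 1) :=
      erdos_ko_rado_of_isAntichain (hrange ▸ hinter) (hrange ▸ hanti) (Nat.mul_div_le n 2)
        (forall_mem_image.2 fun i _ ↦ by have := ha i; simp only [B]; omega)

def consIndicator {m : ℕ} (S : Finset (Fin m)) : Fin (m + 1) → Fin 2 :=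
  Fin.cons 1 fun x ↦ if x ∈ S then 1 else 0

theorem qivec_consIndicator {m : ℕ} {S T : Finset (Fin m)} (hST : ¬S ⊆ T) (hTS : ¬T ⊆ S)
    (hcover : S ∪ T ≠ univ) : QIVec (consIndicator S) (consIndicator T) := by
  obtain ⟨x, hxS, hxT⟩ := not_subset.1 hST
  obtain ⟨y, hyT, hyS⟩ := not_subset.1 hTS
  obtain ⟨z, -, hz⟩ := exists_mem_notMem_of_card_lt_card
    (card_lt_card (ssubset_univ_iff.2 hcover))
  rw [mem_union, not_or] at hz
  intro a b
  fin_cases a <;> fin_cases b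
  · exact ⟨z.succ, by simp [consIndicator, hz.1], by simp [consIndicator, hz.2]⟩
  · exact ⟨y.succ, by simp [consIndicator, hyS], by simp [consIndicator, hyT]⟩
  · exact ⟨x.succ, by simp [consIndicator, hxS], by simp [consIndicator, hxT]⟩
  · exact ⟨0, rfl, rfl⟩

theorem exists_pairwise_qivec_of_le_choose {m s r : ℕ} (hs : 2 * s < m) (hr : r ≤ m.choose s) :
    ∃ C : Fin r → Fin (m + 1) → Fin 2, Pairwise fun i j ↦ QIVec (C i) (C j) := by
  set 𝒮 := powersetCard s (univ : Finset (Fin m))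
  have hr' : r ≤ #𝒮 := by rwa [card_powersetCard, card_univ, Fintype.card_fin]
  let e : Fin r ↪ 𝒮 := (Fin.castLEEmb hr').trans 𝒮.equivFin.symm.toEmbedding
  refine ⟨fun i ↦ consIndicator (e i : Finset (Fin m)), fun i j hij ↦ ?_⟩
  have hcard : ∀ i, #(e i : Finset (Fin m)) = s := fun i ↦ (mem_powersetCard.1 (e i).2).2
  have hne : (e i : Finset (Fin m)) ≠ e j := fun h ↦ hij (e.injective (Subtype.ext h))
  refine qivec_consIndicator (fun h ↦ hne (eq_of_subset_of_card_le h (by rw [hcard, hcard])))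
    (fun h ↦ hne (eq_of_subset_of_card_le h (by rw [hcard, hcard])).symm) fun h ↦ ?_
  have := card_union_le (e i : Finset (Fin m)) (e j)
  rw [h, card_univ, Fintype.card_fin, hcard, hcard] at this
  omega

/-- For every `r ≥ 2`, the minimum number of columns of a binary covering array
with `r` rows is `CAN(r,2) = min{ n : C(n−1, ⌊n/2⌋−1) ≥ r }`. -/
theorem CAN_binary (r : ℕ) (hr : 2 ≤ r) :
    sInf {n | ∃ C : Fin r → Fin n → Fin 2, ∀ i j, i ≠ j → QIVec (C i) (C j)} =
      sInf {n | r ≤ (n - 1).choose (n / 2 - 1)} := by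
  congr 1
  ext n
  refine ⟨fun ⟨C, hC⟩ ↦ le_choose_of_pairwise_qivec hr hC,
    fun (h : r ≤ (n - 1).choose (n / 2 - 1)) ↦ ?_⟩
  have hn : 4 ≤ n := by
    by_contra! hn
    rw [show n / 2 - 1 = 0 by omega, Nat.choose_zero_right] at h
    omega
  obtain ⟨m, rfl⟩ : ∃ m, n = m + 1 := ⟨n - 1, by omega⟩
  exact exists_pairwise_qivec_of_le_choose (s := (m + 1) / 2 - 1) (by omega) (by simpa using h)
end

section
/- For every n ≥ 4, the maximum clique size of the binary qualitative independence graph QI(n,2) equals C(n−1, ⌊n/2⌋ − 1). -/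
/-- The qualitative independence graph. -/
def QIGraph (n k : ℕ) : SimpleGraph (QIVertex n k) :=
  SimpleGraph.fromRel fun P Q => QIPart P.1 Q.1

open Finset
open scoped FinsetFamily

theorem Nat.choose_le_choose_of_le_of_le_two_mul {n r a : ℕ} (hn : n ≤ 2 * r)
    (hra : r ≤ a) : n.choose a ≤ n.choose r := by
  induction a, hra using Nat.le_induction with
  | base => exact le_rfl
  | succ a hra ih =>
    refine le_trans (Nat.le_of_mul_le_mul_right ?_ a.succ_pos) ih
    rw [Nat.choose_succ_right_eq]
    exact Nat.mul_le_mul_left _ (by omega)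

namespace Finset

section LocalLYM
variable {α : Type*} [DecidableEq α] {𝒜 : Finset (Finset α)} {r : ℕ}

theorem card_mul_le_card_shadow_mul_of_forall_subset {s : Finset α}
    (h𝒜 : (𝒜 : Set (Finset α)).Sized r) (hs : ∀ A ∈ 𝒜, A ⊆ s) :
    #𝒜 * r ≤ #(∂ 𝒜) * (#s - r + 1) := by
  refine card_mul_le_card_mul' (· ⊆ ·) (fun A hA => ?_) (fun B hB => ?_)
  · rw [← h𝒜 hA, ← card_image_of_injOn A.erase_injOn]
    refine card_le_card ?_
    simp_rw [image_subset_iff, mem_bipartiteBelow]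
    exact fun a ha => ⟨erase_mem_shadow hA ha, erase_subset _ _⟩
  · obtain ⟨A, hA, hBA, hAB⟩ := mem_shadow_iff_exists_mem_card_add_one.1 hB
    have hBs : #B + 1 ≤ #s := hAB ▸ card_le_card (hs A hA)
    calc #(𝒜.bipartiteAbove (· ⊆ ·) B) ≤ #((s \ B).image (insert · B)) := by
          refine card_le_card fun C hC => ?_
          obtain ⟨hC, hBC⟩ := (mem_bipartiteAbove _).1 hC
          obtain ⟨a, haB, rfl⟩ := exists_eq_insert_iff.2 ⟨hBC, by rw [h𝒜 hC, ← h𝒜 hA, hAB]⟩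
          exact mem_image_of_mem _ (mem_sdiff.2 ⟨hs _ hC (mem_insert_self a B), haB⟩)
      _ ≤ #(s \ B) := card_image_le
      _ = #s - r + 1 := by
          rw [card_sdiff_of_subset (hBA.trans (hs A hA)), ← h𝒜 hA, hAB]; omega

variable [Fintype α]

theorem card_le_card_upShadow_of_two_mul_lt (h𝒜 : (𝒜 : Set (Finset α)).Sized r)
    (hr : 2 * r < Fintype.card α) : #𝒜 ≤ #(∂⁺ 𝒜) := by
  have h := local_lubell_yamamoto_meshalkin_inequality_mul h𝒜.compls
  rw [shadow_compls, card_compls, card_compls,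
    Nat.sub_sub_self (by omega : r ≤ Fintype.card α)] at h
  exact Nat.le_of_mul_le_mul_right
    ((Nat.mul_le_mul_left _ (by omega : r + 1 ≤ Fintype.card α - r)).trans h) (Nat.succ_pos r)

end LocalLYM

theorem exists_isInitSeg_card_eq {α : Type*} [LinearOrder α] [Fintype α] (r : ℕ) {g : ℕ}
    (hg : g ≤ (Fintype.card α).choose r) :
    ∃ 𝒞 : Finset (Finset α), Colex.IsInitSeg 𝒞 r ∧ #𝒞 = g := by
  induction g with
  | zero => exact ⟨∅, Colex.isInitSeg_empty, rfl⟩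
  | succ g ih =>
    obtain ⟨𝒞, h𝒞, rfl⟩ := ih (by omega)
    have hrest : (powersetCard r univ \ 𝒞).Nonempty := by
      rw [← card_pos, card_sdiff_of_subset, card_powersetCard, card_univ]
      · omega
      · exact fun A hA => mem_powersetCard_univ.2 (h𝒞.1 hA)
    obtain ⟨B, hB, hBmin⟩ := exists_min_image _ toColex hrest
    obtain ⟨hBr, hB𝒞⟩ := mem_sdiff.1 hB
    refine ⟨insert B 𝒞, ⟨?_, ?_⟩, card_insert_of_notMem hB𝒞⟩
    · rw [coe_insert, Set.insert_eq, Set.sized_union, Set.sized_singleton]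
      exact ⟨mem_powersetCard_univ.1 hBr, h𝒞.1⟩
    · rintro A C hA ⟨hCA, hC⟩
      refine mem_insert.2 (or_iff_not_imp_left.2 fun hCB => ?_)
      obtain rfl | hA := mem_insert.1 hA
      · by_contra hC𝒞
        exact (hBmin C (mem_sdiff.2 ⟨mem_powersetCard_univ.2 hC, hC𝒞⟩)).not_gt hCA
      · exact h𝒞.2 hA ⟨hCA, hC⟩

theorem Colex.IsInitSeg.notMem_of_card_le_choose {α : Type*} [LinearOrder α] [Fintype α]
    {𝒞 : Finset (Finset α)} {r : ℕ} (h𝒞 : Colex.IsInitSeg 𝒞 r) {T : α} (hT : IsTop T)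
    (hcard : #𝒞 ≤ (Fintype.card α - 1).choose r) {A : Finset α} (hA : A ∈ 𝒞) : T ∉ A := by
  intro hTA
  have hsub : powersetCard r (univ.erase T) ⊆ 𝒞.erase A := fun B hB => by
    obtain ⟨hBT, hBr⟩ := mem_powersetCard.1 hB
    have hTB : T ∉ B := fun h => notMem_erase T univ (hBT h)
    have hBA : B ≠ A := by rintro rfl; exact hTB hTA
    exact mem_erase.2 ⟨hBA, h𝒞.2 hA
      ⟨Colex.toColex_lt_toColex.2 ⟨hBA, fun a _ _ => ⟨T, hTA, hTB, hT a⟩⟩, hBr⟩⟩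
  have h := card_le_card hsub
  rw [card_powersetCard, card_erase_of_mem (mem_univ T), card_univ,
    card_erase_of_mem hA] at h
  have := card_pos.2 ⟨A, hA⟩
  omega

/-- Katona's intersecting shadow theorem at the middle level. -/
theorem card_le_card_shadow_of_intersecting {r : ℕ} {𝒜 : Finset (Finset (Fin (2 * r)))}
    (h𝒜 : (𝒜 : Set (Finset (Fin (2 * r)))).Intersecting)
    (h𝒜r : (𝒜 : Set (Finset (Fin (2 * r)))).Sized r) : #𝒜 ≤ #(∂ 𝒜) := by
  obtain rfl | hr := r.eq_zero_or_pos
  · have : 𝒜 = ∅ := eq_empty_of_forall_notMem fun A hA =>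
      h𝒜.bot_notMem (by rwa [bot_eq_empty, mem_coe, ← card_eq_zero.1 (h𝒜r hA)])
    simp [this]
  have hEKR := erdos_ko_rado h𝒜 h𝒜r (by omega)
  rw [← Nat.choose_symm (by omega), show 2 * r - 1 - (r - 1) = r by omega] at hEKR
  obtain ⟨𝒞, h𝒞, hcard⟩ :=
    exists_isInitSeg_card_eq (α := Fin (2 * r)) r
      (hEKR.trans (by simpa using Nat.choose_le_choose r (by omega)))
  -- By Erdős–Ko–Rado, `𝒞` is small enough to avoid the last point, so local LYM on the
  -- remaining `2r - 1` points already gives `#𝒞 ≤ #∂𝒞`.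
  let T : Fin (2 * r) := ⟨2 * r - 1, by omega⟩
  have hT : IsTop T := fun x => Fin.le_def.2 (by simp only [T]; omega)
  have h𝒞T : ∀ A ∈ 𝒞, A ⊆ univ.erase T := fun A hA x hx =>
    mem_erase.2 ⟨fun h => h𝒞.notMem_of_card_le_choose hT (by simpa [hcard]) hA (h ▸ hx),
      mem_univ x⟩
  have hLYM := card_mul_le_card_shadow_mul_of_forall_subset h𝒞.1 h𝒞T
  rw [card_erase_of_mem (mem_univ T), card_univ, Fintype.card_fin,
    show 2 * r - 1 - r + 1 = r by omega] at hLYM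
  calc #𝒜 = #𝒞 := hcard.symm
    _ ≤ #(∂ 𝒞) := Nat.le_of_mul_le_mul_right hLYM hr
    _ ≤ #(∂ 𝒜) := kruskal_katona h𝒜r hcard.le h𝒞

theorem _root_.Set.Intersecting.compls_of_sized {α : Type*} [DecidableEq α] [Fintype α]
    {𝒜 : Finset (Finset α)} {r : ℕ} (h𝒜 : (𝒜 : Set (Finset α)).Intersecting)
    (h𝒜r : (𝒜 : Set (Finset α)).Sized r) (hr : Fintype.card α = 2 * r) :
    (𝒜ᶜˢ : Set (Finset α)).Intersecting := by
  intro A hA B hB hAB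
  rw [mem_coe, mem_compls] at hA hB
  have hcard : #A + #B = Fintype.card α := by
    have hA' := h𝒜r hA
    have hB' := h𝒜r hB
    rw [card_compl] at hA' hB'
    have := card_le_univ A
    have := card_le_univ B
    omega
  have hunion : A ∪ B = univ := eq_univ_of_card _ (by rw [card_union_of_disjoint hAB, hcard])
  exact h𝒜 hA hB (by rw [disjoint_iff_inter_eq_empty, ← compl_union, hunion, compl_univ])

theorem card_le_card_upShadow_of_intersecting {m r : ℕ} {𝒜 : Finset (Finset (Fin m))}
    (h𝒜 : (𝒜 : Set (Finset (Fin m))).Intersecting)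
    (h𝒜r : (𝒜 : Set (Finset (Fin m))).Sized r) (hr : 2 * r ≤ m) : #𝒜 ≤ #(∂⁺ 𝒜) := by
  obtain hr | rfl := hr.lt_or_eq
  · exact card_le_card_upShadow_of_two_mul_lt h𝒜r (by simpa using hr)
  have hc : (𝒜ᶜˢ : Set (Finset (Fin (2 * r)))).Sized r := by
    simpa [two_mul] using h𝒜r.compls
  calc #𝒜 = #𝒜ᶜˢ := (card_compls 𝒜).symm
    _ ≤ #(∂ 𝒜ᶜˢ) :=
      card_le_card_shadow_of_intersecting (h𝒜.compls_of_sized h𝒜r (Fintype.card_fin _)) hc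
    _ = #(∂⁺ 𝒜) := by rw [shadow_compls, card_compls]

section RaiseSlice
variable {α : Type*} [DecidableEq α] [Fintype α] {𝒜 : Finset (Finset α)} {j : ℕ} {B : Finset α}

def raiseSlice (𝒜 : Finset (Finset α)) (j : ℕ) : Finset (Finset α) :=
  𝒜 \ 𝒜 # j ∪ ∂⁺ (𝒜 # j)

theorem exists_subset_of_mem_raiseSlice (hB : B ∈ raiseSlice 𝒜 j) : ∃ A ∈ 𝒜, A ⊆ B := by
  obtain hB | hB := mem_union.1 hB
  · exact ⟨B, (mem_sdiff.1 hB).1, Subset.rfl⟩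
  · obtain ⟨A, hA, hAB⟩ := exists_subset_of_mem_upShadow hB
    exact ⟨A, slice_subset hA, hAB⟩

theorem card_of_mem_upShadow_slice (hB : B ∈ ∂⁺ (𝒜 # j)) : #B = j + 1 :=
  sized_slice.upShadow hB

theorem succ_le_card_of_mem_raiseSlice (hj : ∀ A ∈ 𝒜, j ≤ #A) (hB : B ∈ raiseSlice 𝒜 j) :
    j + 1 ≤ #B := by
  obtain hB | hB := mem_union.1 hB
  · obtain ⟨hB𝒜, hBj⟩ := mem_sdiff.1 hB
    have := hj B hB𝒜
    have : #B ≠ j := fun h => hBj (mem_slice.2 ⟨hB𝒜, h⟩)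
    omega
  · exact (card_of_mem_upShadow_slice hB).ge

theorem _root_.Set.Intersecting.raiseSlice (h𝒜 : (𝒜 : Set (Finset α)).Intersecting) :
    (raiseSlice 𝒜 j : Set (Finset α)).Intersecting := by
  intro B₁ hB₁ B₂ hB₂ hB
  obtain ⟨A₁, hA₁, hAB₁⟩ := exists_subset_of_mem_raiseSlice hB₁
  obtain ⟨A₂, hA₂, hAB₂⟩ := exists_subset_of_mem_raiseSlice hB₂
  exact h𝒜 hA₁ hA₂ (hB.mono hAB₁ hAB₂)

theorem _root_.IsAntichain.raiseSlice (h𝒜 : IsAntichain (· ⊆ ·) (𝒜 : Set (Finset α)))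
    (hj : ∀ A ∈ 𝒜, j ≤ #A) : IsAntichain (· ⊆ ·) (raiseSlice 𝒜 j : Set (Finset α)) := by
  intro B₁ hB₁ B₂ hB₂ hne hsub
  have hlt : #B₁ < #B₂ := card_lt_card (ssubset_of_subset_of_ne hsub hne)
  obtain hB₂ | hB₂ := mem_union.1 hB₂
  · obtain ⟨A, hA, hAB₁⟩ := exists_subset_of_mem_raiseSlice hB₁
    have hAB₂ : A ≠ B₂ := by
      rintro rfl
      exact hlt.not_ge (card_le_card hAB₁)
    exact h𝒜 hA (mem_sdiff.1 hB₂).1 hAB₂ (hAB₁.trans hsub)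
  · have := succ_le_card_of_mem_raiseSlice hj hB₁
    have := card_of_mem_upShadow_slice hB₂
    omega

theorem _root_.IsAntichain.card_le_card_raiseSlice
    (h𝒜 : IsAntichain (· ⊆ ·) (𝒜 : Set (Finset α))) (hj : #(𝒜 # j) ≤ #(∂⁺ (𝒜 # j))) :
    #𝒜 ≤ #(raiseSlice 𝒜 j) := by
  have hdisj : Disjoint (𝒜 \ 𝒜 # j) (∂⁺ (𝒜 # j)) := disjoint_left.2 fun B hB hB' => by
    obtain ⟨A, hA, hAB, hcard⟩ := mem_upShadow_iff_exists_mem_card_add_one.1 hB'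
    exact h𝒜 (slice_subset hA) (mem_sdiff.1 hB).1 (by rintro rfl; omega) hAB
  rw [raiseSlice, card_union_of_disjoint hdisj, card_sdiff_of_subset slice_subset]
  have := card_le_card (slice_subset (𝒜 := 𝒜) (r := j))
  omega

end RaiseSlice

theorem _root_.IsAntichain.card_le_choose_of_forall_le_card {α : Type*} [Fintype α]
    {𝒜 : Finset (Finset α)} {r : ℕ} (h𝒜 : IsAntichain (· ⊆ ·) (𝒜 : Set (Finset α)))
    (hr : Fintype.card α ≤ 2 * r) (h𝒜r : ∀ A ∈ 𝒜, r ≤ #A) :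
    #𝒜 ≤ (Fintype.card α).choose r := by
  obtain rfl | ⟨A, hA⟩ := 𝒜.eq_empty_or_nonempty
  · simp
  have hpos : 0 < ((Fintype.card α).choose r : ℚ≥0) :=
    Nat.cast_pos.2 (Nat.choose_pos ((h𝒜r A hA).trans (card_le_univ A)))
  have h := calc
    ∑ _ ∈ 𝒜, ((Fintype.card α).choose r : ℚ≥0)⁻¹
    _ ≤ ∑ s ∈ 𝒜, ((Fintype.card α).choose #s : ℚ≥0)⁻¹ := by
      gcongr with s hs
      · exact mod_cast Nat.choose_pos s.card_le_univ
      · exact Nat.choose_le_choose_of_le_of_le_two_mul hr (h𝒜r s hs)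
    _ ≤ 1 := lubell_yamamoto_meshalkin_inequality_sum_inv_choose h𝒜
  simpa [mul_inv_le_iff₀' hpos] using h

/-- Milner's theorem for intersecting antichains. -/
theorem _root_.IsAntichain.card_le_choose_of_intersecting {m : ℕ}
    {𝒜 : Finset (Finset (Fin m))} (h𝒜 : IsAntichain (· ⊆ ·) (𝒜 : Set (Finset (Fin m))))
    (h𝒜' : (𝒜 : Set (Finset (Fin m))).Intersecting) : #𝒜 ≤ m.choose (m / 2 + 1) := by
  suffices ∀ d j, j + d = m / 2 + 1 → ∀ 𝒜 : Finset (Finset (Fin m)),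
      IsAntichain (· ⊆ ·) (𝒜 : Set (Finset (Fin m))) → (𝒜 : Set (Finset (Fin m))).Intersecting →
      (∀ A ∈ 𝒜, j ≤ #A) → #𝒜 ≤ m.choose (m / 2 + 1) from
    this _ 0 (zero_add _) 𝒜 h𝒜 h𝒜' fun _ _ => Nat.zero_le _
  intro d
  induction d with
  | zero =>
    rintro j rfl 𝒜 h𝒜 - hj
    simpa using h𝒜.card_le_choose_of_forall_le_card (by rw [Fintype.card_fin]; omega) hj
  | succ d ih =>
    intro j hjd 𝒜 h𝒜 h𝒜' hj
    have hslice : #(𝒜 # j) ≤ #(∂⁺ (𝒜 # j)) :=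
      card_le_card_upShadow_of_intersecting (h𝒜'.mono (coe_subset.2 slice_subset)) sized_slice
        (by omega)
    exact (h𝒜.card_le_card_raiseSlice hslice).trans <| ih (j + 1) (by omega) _
      (h𝒜.raiseSlice hj) h𝒜'.raiseSlice fun _ => succ_le_card_of_mem_raiseSlice hj

end Finset

namespace Finpartition
variable {α : Type*} [DecidableEq α] [Fintype α]

def ofCompl (s : Finset α) (hs : s.Nonempty) (hsc : sᶜ.Nonempty) :
    Finpartition (univ : Finset α) :=
  (indiscrete hs.ne_empty).extend hsc.ne_empty disjoint_compl_right (union_compl s)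

theorem parts_ofCompl (s : Finset α) (hs : s.Nonempty) (hsc : sᶜ.Nonempty) :
    (ofCompl s hs hsc).parts = {sᶜ, s} := rfl

theorem parts_eq_pair_part (P : Finpartition (univ : Finset α)) (hP : #P.parts = 2) (a : α) :
    P.parts = {P.part a, (P.part a)ᶜ} := by
  have ha : P.part a ∈ P.parts := P.part_mem.2 (mem_univ a)
  obtain ⟨B, hB⟩ : ∃ B, P.parts.erase (P.part a) = {B} :=
    card_eq_one.1 (by rw [card_erase_of_mem ha, hP])
  obtain ⟨hBa, hBP⟩ := mem_erase.1 (hB ▸ mem_singleton_self B)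
  have hcompl : IsCompl (P.part a) B := by
    refine ⟨P.disjoint ha hBP hBa.symm, codisjoint_iff.2 ?_⟩
    have h := P.sup_parts
    rwa [← insert_erase ha, hB, sup_insert, sup_singleton] at h
  rw [← insert_erase ha, hB, hcompl.compl_eq]

end Finpartition

namespace QIVertex
variable {m : ℕ}

/-- The class of `v` avoiding `0`, pulled back along `Fin.succ`. -/
def rep (v : QIVertex (m + 1) 2) : Finset (Fin m) := {i | i.succ ∉ v.1.part 0}

theorem mem_rep {v : QIVertex (m + 1) 2} {i : Fin m} : i ∈ v.rep ↔ i.succ ∉ v.1.part 0 := by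
  simp [rep]

theorem parts_eq (v : QIVertex (m + 1) 2) : v.1.parts = {v.1.part 0, (v.1.part 0)ᶜ} :=
  v.1.parts_eq_pair_part v.2.1 0

theorem map_rep (v : QIVertex (m + 1) 2) : v.rep.map (Fin.succEmb m) = (v.1.part 0)ᶜ := by
  ext x
  cases x using Fin.cases <;> simp [mem_rep]

theorem rep_nonempty (v : QIVertex (m + 1) 2) : v.rep.Nonempty := by
  rw [← map_nonempty (f := Fin.succEmb m), map_rep]
  exact v.1.nonempty_of_mem_parts (by rw [parts_eq]; simp)

theorem rep_injective : Function.Injective (rep (m := m)) := by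
  intro u v h
  have hpart : u.1.part 0 = v.1.part 0 := by
    rw [← compl_inj_iff, ← map_rep, ← map_rep, h]
  exact Subtype.ext (Finpartition.ext (by rw [parts_eq, parts_eq, hpart]))

theorem qiPart_iff (u v : QIVertex (m + 1) 2) :
    QIPart u.1 v.1 ↔ (u.rep ∩ v.rep).Nonempty ∧ ¬u.rep ⊆ v.rep ∧ ¬v.rep ⊆ u.rep := by
  rw [QIPart, parts_eq u, parts_eq v]
  simp [Finset.Nonempty, not_subset, Fin.exists_fin_succ, mem_rep, and_comm, and_left_comm,
    and_assoc]

theorem exists_rep_eq {S : Finset (Fin m)} (h₁ : 2 ≤ #S) (h₂ : #S + 2 ≤ m + 1) :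
    ∃ v : QIVertex (m + 1) 2, v.rep = S := by
  set A := S.map (Fin.succEmb m)
  have h0 : (0 : Fin (m + 1)) ∈ Aᶜ := by simp [A, Fin.succ_ne_zero]
  have hA : #A = #S := card_map _
  have hAc : #Aᶜ = m + 1 - #S := by rw [card_compl, hA, Fintype.card_fin]
  let P := Finpartition.ofCompl A (card_pos.1 (by omega)) ⟨0, h0⟩
  have hP : P.parts = {Aᶜ, A} := Finpartition.parts_ofCompl ..
  have hpart : P.part 0 = Aᶜ := P.part_eq_of_mem (by simp [hP]) h0
  have hcard : #P.parts = 2 := by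
    rw [hP, card_pair]
    exact fun h => mem_compl.1 h0 (h ▸ h0)
  have hsize : ∀ B ∈ P.parts, 2 ≤ #B := by
    rw [hP]
    simp only [mem_insert, mem_singleton, forall_eq_or_imp, forall_eq]
    omega
  refine ⟨⟨P, hcard, hsize⟩, ext fun i => mem_rep.trans ?_⟩
  change i.succ ∉ P.part 0 ↔ i ∈ S
  simp [hpart, A]

end QIVertex

namespace QIGraph
open QIVertex
variable {m : ℕ}

theorem adj_iff {u v : QIVertex (m + 1) 2} :
    (QIGraph (m + 1) 2).Adj u v ↔ (u.rep ∩ v.rep).Nonempty ∧ ¬u.rep ⊆ v.rep ∧ ¬v.rep ⊆ u.rep := by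
  rw [QIGraph, SimpleGraph.fromRel_adj, qiPart_iff, qiPart_iff]
  constructor
  · rintro ⟨-, h | ⟨h₁, h₂, h₃⟩⟩
    · exact h
    · exact ⟨by rwa [inter_comm], h₃, h₂⟩
  · rintro h
    exact ⟨by rintro rfl; exact h.2.1 Subset.rfl, Or.inl h⟩

theorem card_le_choose_of_isNClique {s : Finset (QIVertex (m + 1) 2)} {t : ℕ}
    (hs : (QIGraph (m + 1) 2).IsNClique t s) : t ≤ m.choose (m / 2 + 1) := by
  rw [← hs.card_eq, ← card_image_of_injective s rep_injective]
  refine IsAntichain.card_le_choose_of_intersecting ?_ ?_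
  · rw [coe_image]
    rintro _ ⟨u, hu, rfl⟩ _ ⟨v, hv, rfl⟩ hne
    exact (adj_iff.1 (hs.isClique hu hv (ne_of_apply_ne _ hne))).2.1
  · rw [coe_image]
    rintro _ ⟨u, hu, rfl⟩ _ ⟨v, hv, rfl⟩
    rw [not_disjoint_iff_nonempty_inter]
    obtain rfl | huv := eq_or_ne u v
    · simpa using rep_nonempty u
    · exact (adj_iff.1 (hs.isClique hu hv huv)).1

theorem exists_isNClique (hm : 3 ≤ m) :
    ∃ s : Finset (QIVertex (m + 1) 2), (QIGraph (m + 1) 2).IsNClique (m.choose (m / 2 + 1)) s := by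
  have hrange : ∀ S ∈ powersetCard (m / 2 + 1) (univ : Finset (Fin m)), S ∈ Set.range rep := by
    intro S hS
    rw [mem_powersetCard_univ] at hS
    exact exists_rep_eq (by omega) (by omega)
  obtain ⟨s, -, hs⟩ := subset_set_image_iff.1 (Set.image_univ.symm ▸ hrange)
  have hcard : ∀ v ∈ s, #v.rep = m / 2 + 1 := fun v hv =>
    mem_powersetCard_univ.1 (hs ▸ mem_image_of_mem rep hv)
  refine ⟨s, fun u hu v hv huv => ?_, ?_⟩
  · have hne : u.rep ≠ v.rep := rep_injective.ne huv
    have hu := hcard u hu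
    have hv := hcard v hv
    refine adj_iff.2 ⟨card_pos.1 ?_, fun h => hne (eq_of_subset_of_card_le h (by omega)),
      fun h => hne (eq_of_subset_of_card_le h (by omega)).symm⟩
    have := card_inter_add_card_union u.rep v.rep
    have := card_le_univ (u.rep ∪ v.rep)
    simp only [Fintype.card_fin] at this
    omega
  · rw [← card_image_of_injective s rep_injective, hs, card_powersetCard, card_univ,
      Fintype.card_fin]

end QIGraph

/-- For `n ≥ 4`, the maximum clique size of `QI(n,2)` equals `C(n−1, ⌊n/2⌋−1)`. -/
theorem cliqueNum_QIGraph_two (n : ℕ) (hn : 4 ≤ n) :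
    IsGreatest {t | ∃ s : Finset (QIVertex n 2), (QIGraph n 2).IsNClique t s}
      ((n - 1).choose (n / 2 - 1)) := by
  obtain ⟨m, rfl⟩ : ∃ m, n = m + 1 := ⟨n - 1, by omega⟩
  have hchoose : (m + 1 - 1).choose ((m + 1) / 2 - 1) = m.choose (m / 2 + 1) := by
    rw [Nat.add_sub_cancel, ← Nat.choose_symm (by omega : m / 2 + 1 ≤ m)]
    congr 1
    omega
  rw [hchoose]
  exact ⟨QIGraph.exists_isNClique (by omega),
    fun _ ⟨_, hs⟩ => QIGraph.card_le_choose_of_isNClique hs⟩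
end

section
/- For every positive integer k ≥ 2, the graph QI(k²,k) is (k!)^{k−1}-regular: each uniform k-partition of a k²-set is qualitatively independent with exactly (k!)^{k−1} uniform k-partitions. -/
/-!
Fix a part `A₀` of `P`. A part of a uniform `Q` qualitatively independent of `P` has `k` points
and meets each of the `k` parts of `P`, hence meets each of them in exactly one point. Sending
every point to the unique point of `A₀` in its `Q`-part identifies such `Q` with the maps to `A₀`
that fix `A₀` and restrict to a bijection on every other part of `P`: `k!` choices on each of the
`k - 1` other parts.
-/

open Finset Function
open scoped Nat

theorem Fintype.natCard_bijective_eq_factorial {α β : Type*} [Fintype α] [Fintype β]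
    (h : Fintype.card α = Fintype.card β) :
    Nat.card {g : α → β // Bijective g} = (Fintype.card α)! := by
  classical
  rw [Nat.card_congr Equiv.bijectiveEquiv, Nat.card_eq_fintype_card,
    Fintype.card_equiv (Fintype.equivOfCardEq h)]

namespace Finpartition

variable {α : Type*} [DecidableEq α]

theorem eq_of_forall_part_eq {s : Finset α} {P Q : Finpartition s}
    (h : ∀ x ∈ s, P.part x = Q.part x) : P = Q := by
  have parts_subset : ∀ {P Q : Finpartition s}, (∀ x ∈ s, P.part x = Q.part x) →
      P.parts ⊆ Q.parts := by
    intro P Q h B hB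
    obtain ⟨x, hx⟩ := P.nonempty_of_mem_parts hB
    have hxs := P.le hB hx
    rw [← P.part_eq_of_mem hB hx, h x hxs]
    exact Q.part_mem.2 hxs
  exact Finpartition.ext ((parts_subset h).antisymm (parts_subset fun x hx => (h x hx).symm))

theorem sum_card_inter_parts {s B : Finset α} (P : Finpartition s) (hB : B ⊆ s) :
    ∑ A ∈ P.parts, #(A ∩ B) = #B := by
  simp_rw [inter_comm _ B]
  rw [sum_card_inter (n := 1) fun a ha => ?_, mul_one]
  rw [card_eq_one]
  refine ⟨P.part a, ?_⟩
  ext A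
  simp only [mem_filter, mem_singleton]
  constructor
  · rintro ⟨hA, haA⟩; exact (P.part_eq_of_mem hA haA).symm
  · rintro rfl; exact ⟨P.part_mem.2 (hB ha), P.mem_part (hB ha)⟩

variable [Fintype α]

def IsTransversal (P Q : Finpartition (univ : Finset α)) : Prop :=
  ∀ A ∈ P.parts, ∀ B ∈ Q.parts, #(A ∩ B) = 1

theorem isTransversal_iff {P Q : Finpartition (univ : Finset α)} :
    IsTransversal P Q ↔ (∀ B ∈ Q.parts, #B = #P.parts) ∧
      ∀ A ∈ P.parts, ∀ B ∈ Q.parts, (A ∩ B).Nonempty := by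
  constructor
  · intro h
    refine ⟨fun B hB => ?_, fun A hA B hB => card_pos.1 (by rw [h A hA B hB]; exact one_pos)⟩
    rw [← P.sum_card_inter_parts (subset_univ B), sum_congr rfl fun A hA => h A hA B hB,
      card_eq_sum_ones]
  · rintro ⟨hcard, hmeet⟩ A hA B hB
    have hsum : ∑ A ∈ P.parts, #(A ∩ B) = ∑ _A ∈ P.parts, 1 := by
      rw [P.sum_card_inter_parts (subset_univ B), hcard B hB, card_eq_sum_ones]
    exact ((sum_eq_sum_iff_of_le fun A hA => card_pos.2 (hmeet A hA B hB)).1 hsum.symm A hA).symm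

-- The second clause only bites on the part `A₀` itself; stating it part by part makes the
-- number of labellings a product over the parts.
def IsTransversalLabelling (P : Finpartition (univ : Finset α)) (A₀ : Finset α)
    (f : α → A₀) : Prop :=
  ∀ A : P.parts, Bijective (fun x : A.1 => f x) ∧ ∀ x : A.1, x.1 ∈ A₀ → (f x : α) = x

section Labelling

variable {P Q : Finpartition (univ : Finset α)} {A₀ : Finset α}

theorem IsTransversal.existsUnique_mem_part (hQ : IsTransversal P Q) (hA₀ : A₀ ∈ P.parts)
    (x : α) : ∃! a : A₀, a.1 ∈ Q.part x := by
  obtain ⟨a, ha⟩ := card_eq_one.1 (hQ A₀ hA₀ _ (Q.part_mem.2 (mem_univ x)))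
  obtain ⟨haA₀, hax⟩ := mem_inter.1 (ha ▸ mem_singleton_self a)
  exact ⟨⟨a, haA₀⟩, hax, fun b hb => Subtype.ext <| mem_singleton.1 (ha ▸ mem_inter.2 ⟨b.2, hb⟩)⟩

noncomputable def IsTransversal.label (hQ : IsTransversal P Q) (hA₀ : A₀ ∈ P.parts) (x : α) :
    A₀ :=
  (hQ.existsUnique_mem_part hA₀ x).exists.choose

variable (hQ : IsTransversal P Q) (hA₀ : A₀ ∈ P.parts)

theorem IsTransversal.label_eq_iff {x : α} {a : A₀} : hQ.label hA₀ x = a ↔ a.1 ∈ Q.part x :=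
  ⟨fun h => h ▸ (hQ.existsUnique_mem_part hA₀ x).exists.choose_spec,
    fun h => (hQ.existsUnique_mem_part hA₀ x).unique
      (hQ.existsUnique_mem_part hA₀ x).exists.choose_spec h⟩

theorem IsTransversal.label_mem_part (x : α) : (hQ.label hA₀ x).1 ∈ Q.part x :=
  hQ.label_eq_iff hA₀ |>.1 rfl

theorem IsTransversal.label_eq_label_iff {x y : α} :
    hQ.label hA₀ x = hQ.label hA₀ y ↔ Q.part x = Q.part y := by
  rw [hQ.label_eq_iff, Q.mem_part_iff_part_eq_part (mem_univ _) (mem_univ x),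
    Q.part_eq_of_mem (Q.part_mem.2 (mem_univ y)) (hQ.label_mem_part hA₀ y), eq_comm]

theorem IsTransversal.isTransversalLabelling_label :
    IsTransversalLabelling P A₀ (hQ.label hA₀) := by
  intro ⟨A, hA⟩
  refine ⟨⟨fun x y hxy => ?_, fun a => ?_⟩, fun x hx => ?_⟩
  · have hy : y.1 ∈ Q.part x := by
      rw [Q.mem_part_iff_part_eq_part (mem_univ _) (mem_univ _)]
      exact ((hQ.label_eq_label_iff hA₀).1 hxy).symm
    exact Subtype.ext <| card_le_one.1 (hQ A hA _ (Q.part_mem.2 (mem_univ x.1))).le _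
      (mem_inter.2 ⟨x.2, Q.mem_part (mem_univ _)⟩) _ (mem_inter.2 ⟨y.2, hy⟩)
  · obtain ⟨x, hx⟩ := card_eq_one.1 (hQ A hA _ (Q.part_mem.2 (mem_univ a.1)))
    have hxA := mem_inter.1 (hx ▸ mem_singleton_self x)
    refine ⟨⟨x, hxA.1⟩, (hQ.label_eq_iff hA₀).2 ?_⟩
    rw [Q.part_eq_of_mem (Q.part_mem.2 (mem_univ a.1)) hxA.2]
    exact Q.mem_part (mem_univ _)
  · exact congrArg Subtype.val ((hQ.label_eq_iff hA₀ (a := ⟨x, hx⟩)).2 (Q.mem_part (mem_univ _)))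

noncomputable def ker {β : Type*} [DecidableEq β] (f : α → β) : Finpartition (univ : Finset α) :=
  @ofSetoid _ _ _ (Setoid.ker f) fun x y => decEq (f x) (f y)

theorem mem_part_ker {β : Type*} [DecidableEq β] {f : α → β} {x y : α} :
    y ∈ (ker f).part x ↔ f x = f y :=
  mem_part_ofSetoid_iff_rel

theorem IsTransversalLabelling.coe_apply_of_mem {f : α → A₀}
    (hf : IsTransversalLabelling P A₀ f) {a : α} (ha : a ∈ A₀) : (f a : α) = a :=
  (hf ⟨P.part a, P.part_mem.2 (mem_univ a)⟩).2 ⟨a, P.mem_part (mem_univ a)⟩ ha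

theorem IsTransversalLabelling.apply_apply {f : α → A₀}
    (hf : IsTransversalLabelling P A₀ f) (x : α) : f (f x) = f x :=
  Subtype.ext (hf.coe_apply_of_mem (f x).2)

theorem IsTransversalLabelling.isTransversal_ker {f : α → A₀}
    (hf : IsTransversalLabelling P A₀ f) : IsTransversal P (ker f) := by
  intro A hA B hB
  obtain ⟨x, hx⟩ := (ker f).nonempty_of_mem_parts hB
  rw [← (ker f).part_eq_of_mem hB hx, card_eq_one]
  have hbij := (hf ⟨A, hA⟩).1
  obtain ⟨y, hy⟩ := hbij.2 (f x)
  refine ⟨y, ext fun z => ?_⟩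
  rw [mem_inter, mem_part_ker, mem_singleton]
  constructor
  · rintro ⟨hzA, hxz⟩
    exact congrArg Subtype.val (hbij.1 (a₁ := ⟨z, hzA⟩) (hy.trans hxz).symm)
  · rintro rfl
    exact ⟨y.2, hy.symm⟩

theorem IsTransversal.ker_label : ker (hQ.label hA₀) = Q :=
  eq_of_forall_part_eq fun x _ => ext fun y => by
    rw [mem_part_ker, hQ.label_eq_label_iff,
      Q.mem_part_iff_part_eq_part (mem_univ _) (mem_univ _), eq_comm]

theorem IsTransversalLabelling.label_isTransversal_ker {f : α → A₀}
    (hf : IsTransversalLabelling P A₀ f) : hf.isTransversal_ker.label hA₀ = f :=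
  funext fun x => (hf.isTransversal_ker.label_eq_iff hA₀).2 (mem_part_ker.2 (hf.apply_apply x).symm)

noncomputable def transversalEquivLabelling :
    {Q // IsTransversal P Q} ≃ {f : α → A₀ // IsTransversalLabelling P A₀ f} where
  toFun Q := ⟨Q.2.label hA₀, Q.2.isTransversalLabelling_label hA₀⟩
  invFun f := ⟨ker f.1, f.2.isTransversal_ker⟩
  left_inv Q := Subtype.ext (Q.2.ker_label hA₀)
  right_inv f := Subtype.ext (f.2.label_isTransversal_ker hA₀)

end Labelling

theorem natCard_subtype_forall_parts {β : Type*} (P : Finpartition (univ : Finset α))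
    (p : ∀ A : P.parts, (A.1 → β) → Prop) :
    Nat.card {f : α → β // ∀ A : P.parts, p A fun x => f x} =
      ∏ A : P.parts, Nat.card {g : A.1 → β // p A g} := by
  let e : (α → β) ≃ ∀ A : P.parts, A.1 → β :=
    (((Equiv.subtypeUnivEquiv mem_univ).symm.trans P.equivSigmaParts).arrowCongr
      (Equiv.refl β)).trans (Equiv.piCurry fun _ _ => β)
  rw [← Nat.card_pi]
  exact Nat.card_congr ((e.subtypeEquiv fun f => Iff.rfl).trans Equiv.subtypePiEquivPi)

theorem natCard_isTransversalLabelling {P : Finpartition (univ : Finset α)} {A₀ : Finset α}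
    (hA₀ : A₀ ∈ P.parts) (hcard : ∀ A ∈ P.parts, #A = #A₀) :
    Nat.card {f : α → A₀ // IsTransversalLabelling P A₀ f} = (#A₀)! ^ (#P.parts - 1) := by
  refine (natCard_subtype_forall_parts (β := A₀) P
    fun A g => Bijective g ∧ ∀ x : A.1, x.1 ∈ A₀ → (g x : α) = x).trans ?_
  have self_block :
      Nat.card {g : A₀ → A₀ // Bijective g ∧ ∀ x : A₀, x.1 ∈ A₀ → (g x : α) = x} = 1 :=
    Nat.card_eq_one_iff_unique.2 ⟨⟨fun g h => Subtype.ext <| funext fun x =>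
      Subtype.ext ((g.2.2 x x.2).trans (h.2.2 x x.2).symm)⟩, ⟨⟨id, bijective_id, fun _ _ => rfl⟩⟩⟩
  have other_block : ∀ A ∈ (univ : Finset P.parts).erase ⟨A₀, hA₀⟩,
      Nat.card {g : A.1 → A₀ // Bijective g ∧ ∀ x : A.1, x.1 ∈ A₀ → (g x : α) = x} = (#A₀)! := by
    intro A hA
    have disjoint : ∀ x : A.1, x.1 ∉ A₀ := fun x hx =>
      ne_of_mem_erase hA (Subtype.ext (P.eq_of_mem_parts A.2 hA₀ x.2 hx))
    rw [Nat.card_congr (Equiv.subtypeEquivRight fun g =>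
      and_iff_left fun x hx => absurd hx (disjoint x)), Fintype.natCard_bijective_eq_factorial]
      <;> simp [hcard A A.2]
  rw [← mul_prod_erase univ _ (mem_univ ⟨A₀, hA₀⟩), self_block, one_mul, prod_congr rfl other_block,
    prod_const, card_erase_of_mem (mem_univ _), card_univ, Fintype.card_coe]

end Finpartition

/-- For `k ≥ 2`, the graph `QI(k²,k)` is `(k!)^(k−1)`-regular: each uniform
`k`-partition of a `k²`-set is qualitatively independent with exactly
`(k!)^(k−1)` uniform `k`-partitions. -/
theorem QIGraph_regular (k : ℕ) (hk : 2 ≤ k)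
    (P : Finpartition (Finset.univ : Finset (Fin (k ^ 2))))
    (hP : ∀ A ∈ P.parts, A.card = k) :
    Nat.card {Q : Finpartition (Finset.univ : Finset (Fin (k ^ 2))) //
        (∀ B ∈ Q.parts, B.card = k) ∧
        ∀ A ∈ P.parts, ∀ B ∈ Q.parts, (A ∩ B).Nonempty} =
      (Nat.factorial k) ^ (k - 1) := by
  have hk0 : 0 < k := by omega
  have card_parts : #P.parts = k := by
    have h := P.sum_card_parts
    rw [sum_const_nat hP, card_univ, Fintype.card_fin] at h
    exact Nat.eq_of_mul_eq_mul_right hk0 (h.trans (sq k))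
  obtain ⟨A₀, hA₀⟩ := P.parts_nonempty (univ_nonempty_iff.2 ⟨⟨0, pow_pos hk0 2⟩⟩).ne_empty
  have uniform_qi_iff (Q : Finpartition (univ : Finset (Fin (k ^ 2)))) :
      ((∀ B ∈ Q.parts, #B = k) ∧ ∀ A ∈ P.parts, ∀ B ∈ Q.parts, (A ∩ B).Nonempty) ↔
        P.IsTransversal Q := by
    rw [Finpartition.isTransversal_iff, card_parts]
  rw [Nat.card_congr ((Equiv.subtypeEquivRight uniform_qi_iff).trans
      (Finpartition.transversalEquivLabelling hA₀)),
    Finpartition.natCard_isTransversalLabelling hA₀ fun A hA => by rw [hP A hA, hP A₀ hA₀],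
    card_parts, hP A₀ hA₀]
end

section
/- For every positive integer k ≥ 2, the chromatic number of QI(k²,k) is at most C(k+1, 2): assigning to each uniform k-partition P a pair {a,b} ⊆ {1,…,k+1} of elements lying in a common class of P is a proper coloring. -/
/-- Vertices of `QI(k²,k)`: uniform `k`-partitions of a `k²`-set (all classes of
size exactly `k`). -/
def UQIVertex (k : ℕ) : Type :=
  {P : Finpartition (Finset.univ : Finset (Fin (k ^ 2))) //
    ∀ A ∈ P.parts, A.card = k}

/-- The graph `QI(k²,k)`: uniform `k`-partitions of a `k²`-set, adjacent iff
qualitatively independent (every class of one meets every class of the other). -/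
def UQIGraph (k : ℕ) : SimpleGraph (UQIVertex k) :=
  SimpleGraph.fromRel fun P Q =>
    ∀ A ∈ P.1.parts, ∀ B ∈ Q.1.parts, (A ∩ B).Nonempty

/-!
Pigeonhole: among any `k + 1` points, some two lie in a common class of a `k`-partition `P`,
and we colour `P` by such a pair. If `Q` has the same colour, the class `A` of `P` containing
the pair meets all `k` classes of `Q`, and two of its points fall into the same class of `Q`,
so `|A| > k`, contradicting uniformity.
-/

open Finset

namespace Finpartition

variable {α : Type*} [DecidableEq α] {s : Finset α}

theorem exists_pair_subset_part_of_card_parts_lt (P : Finpartition s) {T : Finset α}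
    (hT : T ⊆ s) (h : #P.parts < #T) : ∃ p ∈ T.powersetCard 2, ∃ A ∈ P.parts, p ⊆ A := by
  obtain ⟨x, hx, y, hy, hxy, hpart⟩ := exists_ne_map_eq_of_card_lt_of_maps_to h
    (f := P.part) fun z hz => P.part_mem.2 (hT hz)
  refine ⟨{x, y}, mem_powersetCard.2 ⟨insert_subset hx (singleton_subset_iff.2 hy),
    card_pair hxy⟩, P.part x, P.part_mem.2 (hT hx), insert_subset (P.mem_part (hT hx)) ?_⟩
  rw [singleton_subset_iff, hpart]
  exact P.mem_part (hT hy)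

theorem card_parts_lt_card_of_forall_inter_nonempty (Q : Finpartition s) {A B p : Finset α}
    (hmeet : ∀ B' ∈ Q.parts, (A ∩ B').Nonempty) (hB : B ∈ Q.parts) (hp : #p = 2)
    (hpA : p ⊆ A) (hpB : p ⊆ B) : #Q.parts < #A := by
  have hsurj : Q.parts ⊆ A.image Q.part := fun B' hB' => by
    obtain ⟨z, hz⟩ := hmeet B' hB'
    exact mem_image.2 ⟨z, (mem_inter.1 hz).1, Q.part_eq_of_mem hB' (mem_inter.1 hz).2⟩
  have hninj : ¬ Set.InjOn Q.part A := by
    obtain ⟨x, y, hxy, rfl⟩ := card_eq_two.1 hp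
    have hx : x ∈ ({x, y} : Finset α) := mem_insert_self x {y}
    have hy : y ∈ ({x, y} : Finset α) := mem_insert_of_mem (mem_singleton_self y)
    exact fun hinj => hxy <| hinj (hpA hx) (hpA hy) <| by
      rw [Q.part_eq_of_mem hB (hpB hx), Q.part_eq_of_mem hB (hpB hy)]
  calc #Q.parts ≤ #(A.image Q.part) := card_le_card hsurj
    _ < #A := lt_of_le_of_ne card_image_le (mt card_image_iff.1 hninj)

theorem card_eq_mul_card_parts (P : Finpartition s) {k : ℕ} (h : ∀ A ∈ P.parts, #A = k) :
    #s = k * #P.parts := by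
  rw [← P.sum_card_parts, sum_congr rfl h, sum_const, smul_eq_mul, mul_comm]

end Finpartition

namespace UQIVertex

variable {k : ℕ}

theorem card_parts (hk : 0 < k) (P : UQIVertex k) : #P.1.parts = k := by
  have h : k * k = k * #P.1.parts := (sq k).symm.trans <|
    (card_fin _).symm.trans (P.1.card_eq_mul_card_parts P.2)
  exact (Nat.eq_of_mul_eq_mul_left hk h).symm

theorem not_forall_inter_nonempty_of_pair_subset (hk : 0 < k) {P Q : UQIVertex k}
    {A B p : Finset (Fin (k ^ 2))} (hA : A ∈ P.1.parts) (hB : B ∈ Q.1.parts) (hp : #p = 2)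
    (hpA : p ⊆ A) (hpB : p ⊆ B) :
    ¬ ∀ A' ∈ P.1.parts, ∀ B' ∈ Q.1.parts, (A' ∩ B').Nonempty := fun h => by
  have hlt := Q.1.card_parts_lt_card_of_forall_inter_nonempty (h A hA) hB hp hpA hpB
  rw [card_parts hk, P.2 A hA] at hlt
  exact lt_irrefl k hlt

end UQIVertex

namespace UQIGraph

variable {k : ℕ}

theorem not_adj_of_pair_subset (hk : 0 < k) {P Q : UQIVertex k}
    {A B p : Finset (Fin (k ^ 2))} (hA : A ∈ P.1.parts) (hB : B ∈ Q.1.parts) (hp : #p = 2)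
    (hpA : p ⊆ A) (hpB : p ⊆ B) : ¬ (UQIGraph k).Adj P Q := by
  rintro ⟨-, h | h⟩
  · exact UQIVertex.not_forall_inter_nonempty_of_pair_subset hk hA hB hp hpA hpB h
  · exact UQIVertex.not_forall_inter_nonempty_of_pair_subset hk hB hA hp hpB hpA h

theorem colorable (hk : 2 ≤ k) : (UQIGraph k).Colorable ((k + 1).choose 2) := by
  obtain ⟨T, -, hT⟩ := exists_subset_card_eq (s := (univ : Finset (Fin (k ^ 2)))) (n := k + 1)
    (by rw [card_univ, Fintype.card_fin]; nlinarith)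
  have hpair (P : UQIVertex k) : ∃ p ∈ T.powersetCard 2, ∃ A ∈ P.1.parts, p ⊆ A :=
    P.1.exists_pair_subset_part_of_card_parts_lt (subset_univ T)
      (by rw [UQIVertex.card_parts (by omega), hT]; omega)
  choose c hc A hA hcA using hpair
  let C : (UQIGraph k).Coloring (T.powersetCard 2) :=
    SimpleGraph.Coloring.mk (fun P => ⟨c P, hc P⟩) fun {P Q} hadj hcol =>
      not_adj_of_pair_subset (by omega) (hA P) (hA Q) (mem_powersetCard.1 (hc P)).2 (hcA P)
        (Subtype.mk.inj hcol ▸ hcA Q) hadj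
  simpa only [Fintype.card_coe, card_powersetCard, hT] using C.colorable

end UQIGraph

/-- For `k ≥ 2`, the chromatic number of `QI(k²,k)` is at most `C(k+1, 2)`. -/
theorem chromaticNumber_QIGraph_le (k : ℕ) (hk : 2 ≤ k) :
    (UQIGraph k).chromaticNumber ≤ ((k + 1).choose 2 : ℕ) :=
  (UQIGraph.colorable hk).chromaticNumber_le
end

section
/- Let n = ck for positive integers c, k. If 𝒫 is a family of k-partitions of an n-set such that for all distinct P, Q ∈ 𝒫 and all classes P_i ∈ P, Q_j ∈ Q we have P_i ⊄ Q_j and Q_j ⊄ P_i (Sperner partition system), then |𝒫| ≤ (1/k)·C(n, c). Moreover equality forces every class of every partition in 𝒫 to have size exactly c. -/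
open Finset

lemma choose_logconcave (n j : ℕ) (h : j + 2 ≤ n) :
    (n.choose j : ℚ) * n.choose (j+2) < (n.choose (j+1))^2 := by
  have hx : 0 < (n.choose j : ℚ) := by
    exact_mod_cast Nat.choose_pos (by omega)
  have hm : 0 < (n.choose (j+1) : ℚ) := by
    exact_mod_cast Nat.choose_pos (by omega)
  have hy : 0 < (n.choose (j+2) : ℚ) := by
    exact_mod_cast Nat.choose_pos h
  have e1 : (n.choose (j+1) : ℚ) * (j+1) = n.choose j * ((n : ℚ) - j) := by
    have t := congrArg (Nat.cast (R := ℚ)) (Nat.choose_succ_right_eq n j)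
    push_cast [Nat.cast_sub (show j ≤ n by omega)] at t
    linarith
  have e2 : (n.choose (j+2) : ℚ) * (j+2) = n.choose (j+1) * ((n : ℚ) - j - 1) := by
    have t := congrArg (Nat.cast (R := ℚ)) (Nat.choose_succ_right_eq n (j+1))
    push_cast [Nat.cast_sub (show j + 1 ≤ n by omega)] at t
    linarith
  have h2 : (2 : ℚ) ≤ (n : ℚ) - j := by
    have : (j : ℚ) + 2 ≤ n := by exact_mod_cast h
    linarith
  nlinarith [mul_pos hx hy, mul_pos hm hm, sq_nonneg ((n:ℚ) - j)]

noncomputable def ff (n a : ℕ) : ℚ := 1 / (n.choose a)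

lemma ff_convex (n j : ℕ) (h : j + 2 ≤ n) :
    2 * ff n (j+1) < ff n j + ff n (j+2) := by
  have hx : 0 < (n.choose j : ℚ) := by
    exact_mod_cast Nat.choose_pos (by omega)
  have hm : 0 < (n.choose (j+1) : ℚ) := by
    exact_mod_cast Nat.choose_pos (by omega)
  have hy : 0 < (n.choose (j+2) : ℚ) := by
    exact_mod_cast Nat.choose_pos h
  have hlc := choose_logconcave n j h
  set x := (n.choose j : ℚ)
  set m := (n.choose (j+1) : ℚ)
  set y := (n.choose (j+2) : ℚ)
  have key : 2 * (x * y) < m * (x + y) := by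
    nlinarith [sq_nonneg (x - y), mul_pos hx hy, mul_pos (mul_pos hx hy) hm,
      mul_pos hm (add_pos hx hy)]
  unfold ff
  rw [div_add_div _ _ (ne_of_gt hx) (ne_of_gt hy)]
  rw [show (2 : ℚ) * (1 / m) = 2 / m by ring, div_lt_div_iff₀ hm (mul_pos hx hy)]
  nlinarith

lemma Dmono (n : ℕ) : ∀ i j : ℕ, i ≤ j → j + 1 ≤ n →
    ff n (i+1) - ff n i ≤ ff n (j+1) - ff n j := by
  intro i j hij
  induction j, hij using Nat.le_induction with
  | base => intro _; exact le_rfl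
  | succ j hij ih =>
    intro hj
    have h1 := ih (by omega)
    have h2 := ff_convex n j (by omega)
    linarith

lemma tangent_upper (n c : ℕ) : ∀ a : ℕ, c ≤ a → a ≤ n →
    ((a : ℚ) - c) * (ff n (c+1) - ff n c) ≤ ff n a - ff n c := by
  intro a hca
  induction a, hca using Nat.le_induction with
  | base => intro _; simp
  | succ a hca ih =>
    intro ha
    have h1 := ih (by omega)
    have h2 := Dmono n c a hca ha
    push_cast
    have : (c : ℚ) ≤ a := by exact_mod_cast hca
    nlinarith

lemma tangent_lower (n c : ℕ) (hc : 1 ≤ c) (hcn : c ≤ n) :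
    ∀ d : ℕ, d + 1 ≤ c → ff n c - ff n (c - d) ≤ d * (ff n c - ff n (c-1)) := by
  intro d
  induction d with
  | zero => intro _; simp
  | succ d ih =>
    intro hd
    have h1 := ih (by omega)
    set e := c - (d + 1) with he
    have he1 : e + 1 = c - d := by omega
    have h2 := Dmono n e (c-1) (by omega) (by omega)
    rw [show c - 1 + 1 = c by omega] at h2
    rw [he1] at h2
    push_cast
    linarith

noncomputable def ss (n c : ℕ) : ℚ := (ff n (c+1) - ff n (c-1)) / 2

lemma tangent (n c : ℕ) (hc : 1 ≤ c) (hcn : c + 1 ≤ n) (a : ℕ) (ha1 : 1 ≤ a) (han : a ≤ n) :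
    ff n c + ss n c * ((a : ℚ) - c) ≤ ff n a ∧
      (ff n a = ff n c + ss n c * ((a : ℚ) - c) → a = c) := by
  have hconv := ff_convex n (c-1) (by omega)
  rw [show c - 1 + 1 = c by omega, show c - 1 + 2 = c + 1 by omega] at hconv
  -- hconv : 2 * ff n c < ff n (c-1) + ff n (c+1)
  have hs1 : ss n c < ff n (c+1) - ff n c := by unfold ss; linarith
  have hs2 : ff n c - ff n (c-1) < ss n c := by unfold ss; linarith
  rcases lt_trichotomy a c with hac | hac | hac
  · have hd := tangent_lower n c hc (by omega) (c - a) (by omega)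
    rw [show c - (c - a) = a by omega] at hd
    have hca : ((c : ℚ) - a) = ((c - a : ℕ) : ℚ) := by
      push_cast [Nat.cast_sub (le_of_lt hac)]; ring
    have hpos : (0:ℚ) < ((c - a : ℕ) : ℚ) := by
      exact_mod_cast Nat.sub_pos_of_lt hac
    have key : ff n c - ff n a < ((c : ℚ) - a) * ss n c := by
      rw [hca]
      calc ff n c - ff n a ≤ ((c - a : ℕ) : ℚ) * (ff n c - ff n (c-1)) := hd
        _ < ((c - a : ℕ) : ℚ) * ss n c := by
            exact (mul_lt_mul_iff_right₀ hpos).mpr hs2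
    constructor
    · nlinarith [key]
    · intro heq; exfalso; nlinarith [key]
  · subst hac; simp
  · have hd := tangent_upper n c a (le_of_lt hac) han
    have hpos : (0:ℚ) < (a : ℚ) - c := by
      have : (c:ℚ) < a := by exact_mod_cast hac
      linarith
    have : ((a : ℚ) - c) * ss n c < ff n a - ff n c := by
      calc ((a:ℚ) - c) * ss n c < ((a:ℚ) - c) * (ff n (c+1) - ff n c) := by
            exact (mul_lt_mul_iff_right₀ hpos).mpr hs1
        _ ≤ ff n a - ff n c := hd
    exact ⟨by linarith, fun heq => absurd heq (by nlinarith)⟩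

open Finset

/-- Sperner bound for partition systems: if `n = ck` and `Ps` is a family of
`k`-partitions of an `n`-set such that for distinct `P, Q ∈ Ps` no class of one is
contained in a class of the other, then `|Ps| ≤ (1/k)·C(n, c)`; equality forces
every class of every partition in `Ps` to have size exactly `c`. -/
theorem sperner_partition_bound (n c k : ℕ) (hc : 0 < c) (hk : 0 < k)
    (hn : n = c * k)
    (Ps : Finset (Finpartition (Finset.univ : Finset (Fin n))))
    (hpart : ∀ P ∈ Ps, P.parts.card = k)
    (hSperner : ∀ P ∈ Ps, ∀ Q ∈ Ps, P ≠ Q →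
      ∀ A ∈ P.parts, ∀ B ∈ Q.parts, ¬ A ⊆ B ∧ ¬ B ⊆ A) :
    Ps.card * k ≤ n.choose c ∧
      (Ps.card * k = n.choose c → ∀ P ∈ Ps, ∀ A ∈ P.parts, A.card = c) := by
  classical
  -- trivial case k = 1
  rcases eq_or_lt_of_le (Nat.one_le_iff_ne_zero.mpr hk.ne') with hk1 | hk2
  · subst hk1
    rw [Nat.mul_one] at hn
    subst hn
    have huniv : ∀ P ∈ Ps, ∀ A ∈ P.parts, A = Finset.univ := by
      intro P hP A hA
      obtain ⟨B, hB⟩ := Finset.card_eq_one.mp (hpart P hP)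
      have hs := P.sup_parts
      rw [hB] at hs hA
      rw [Finset.mem_singleton] at hA
      rw [Finset.sup_singleton] at hs
      rw [hA]; exact hs
    have hle1 : Ps.card ≤ 1 := by
      rw [Finset.card_le_one]
      intro P hP Q hQ
      by_contra hPQ
      have hPne : P.parts.Nonempty := Finset.card_pos.mp (by rw [hpart P hP]; norm_num)
      have hQne : Q.parts.Nonempty := Finset.card_pos.mp (by rw [hpart Q hQ]; norm_num)
      obtain ⟨A, hA⟩ := hPne
      obtain ⟨B, hB⟩ := hQne
      have := (hSperner P hP Q hQ hPQ A hA B hB).1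
      rw [huniv P hP A hA, huniv Q hQ B hB] at this
      exact this (subset_refl _)
    constructor
    · rw [Nat.choose_self, Nat.mul_one]; exact hle1
    · intro _ P hP A hA
      rw [huniv P hP A hA]
      simp
  -- main case k ≥ 2
  have hcn : c + 1 ≤ n := by nlinarith
  have hcen : c ≤ n := by omega
  have hchoose : 0 < (n.choose c : ℚ) := by exact_mod_cast Nat.choose_pos hcen
  set 𝒜 : Finset (Finset (Fin n)) := Ps.biUnion (fun P => P.parts) with h𝒜
  have hdisj : ∀ P ∈ Ps, ∀ Q ∈ Ps, P ≠ Q → Disjoint P.parts Q.parts := by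
    intro P hP Q hQ hPQ
    rw [Finset.disjoint_left]
    intro A hAP hAQ
    exact (hSperner P hP Q hQ hPQ A hAP A hAQ).1 (subset_refl A)
  have hanti : IsAntichain (· ⊆ ·) (𝒜 : Set (Finset (Fin n))) := by
    intro A hA B hB hAB hsub
    simp only [h𝒜, coe_biUnion, Set.mem_iUnion, mem_coe] at hA hB
    obtain ⟨P, hP, hAP⟩ := hA
    obtain ⟨Q, hQ, hBQ⟩ := hB
    rcases eq_or_ne P Q with rfl | hPQ
    · have hd : Disjoint A B := P.disjoint hAP hBQ hAB
      rw [Finset.disjoint_left] at hd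
      obtain ⟨x, hx⟩ := P.nonempty_of_mem_parts hAP
      exact hd hx (hsub hx)
    · exact (hSperner P hP Q hQ hPQ A hAP B hBQ).1 hsub
  have hcard1 : ∀ A ∈ 𝒜, 1 ≤ A.card ∧ A.card ≤ n := by
    intro A hA
    obtain ⟨P, hP, hAP⟩ := Finset.mem_biUnion.mp hA
    refine ⟨Finset.card_pos.mpr (P.nonempty_of_mem_parts hAP), ?_⟩
    simpa using Finset.card_le_univ A
  -- LYM
  have hLYM : ∑ r ∈ range (n + 1), ((𝒜 # r).card : ℚ) / (n.choose r) ≤ 1 := by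
    have := Finset.sum_card_slice_div_choose_le_one (𝕜 := ℚ) hanti
    simpa [Fintype.card_fin] using this
  have hslice : ∑ r ∈ range (n + 1), ((𝒜 # r).card : ℚ) / (n.choose r)
      = ∑ A ∈ 𝒜, ff n A.card := by
    rw [← Finset.sum_fiberwise_of_maps_to (g := Finset.card) (t := range (n+1))
        (fun A hA => Finset.mem_range.mpr (Nat.lt_succ_of_le (hcard1 A hA).2))
        (fun A => ff n A.card)]
    refine Finset.sum_congr rfl fun r _ => ?_
    have h1 : ∑ A ∈ 𝒜.filter (fun A => A.card = r), ff n A.card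
        = ∑ A ∈ 𝒜.filter (fun A => A.card = r), ff n r :=
      Finset.sum_congr rfl fun A hA => by rw [(Finset.mem_filter.mp hA).2]
    rw [h1, Finset.sum_const, nsmul_eq_mul]
    have : 𝒜 # r = 𝒜.filter (fun A => A.card = r) := rfl
    rw [this, ff]
    ring
  have htot : ∑ A ∈ 𝒜, ff n A.card ≤ 1 := hslice ▸ hLYM
  -- linear part sums
  have hsumcard : ∀ P ∈ Ps, ∑ A ∈ P.parts, ((A.card : ℚ)) = n := by
    intro P hP
    have := P.sum_card_parts
    rw [Finset.card_univ, Fintype.card_fin] at this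
    exact_mod_cast this
  have hper : ∀ P ∈ Ps, ∑ A ∈ P.parts, (ff n c + ss n c * ((A.card : ℚ) - c))
      = k * ff n c := by
    intro P hP
    have h1 : ∑ A ∈ P.parts, ((A.card : ℚ) - c) = 0 := by
      rw [Finset.sum_sub_distrib, hsumcard P hP, Finset.sum_const, hpart P hP,
        nsmul_eq_mul]
      have : (n : ℚ) = c * k := by exact_mod_cast hn
      linarith
    rw [Finset.sum_add_distrib, ← Finset.mul_sum, h1, Finset.sum_const, hpart P hP,
      nsmul_eq_mul]
    ring
  have hpd : (↑Ps : Set (Finpartition (Finset.univ : Finset (Fin n)))).PairwiseDisjoint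
      (fun P => P.parts) := fun P hP Q hQ hPQ => hdisj P hP Q hQ hPQ
  have hlin : ∑ A ∈ 𝒜, (ff n c + ss n c * ((A.card : ℚ) - c))
      = (Ps.card : ℚ) * k * ff n c := by
    rw [h𝒜, Finset.sum_biUnion hpd]
    rw [Finset.sum_congr rfl hper, Finset.sum_const, nsmul_eq_mul]
    ring
  have hterm : ∀ A ∈ 𝒜, ff n c + ss n c * ((A.card : ℚ) - c) ≤ ff n A.card :=
    fun A hA => (tangent n c hc hcn A.card (hcard1 A hA).1 (hcard1 A hA).2).1
  have hlow : (Ps.card : ℚ) * k * ff n c ≤ ∑ A ∈ 𝒜, ff n A.card := by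
    rw [← hlin]
    exact Finset.sum_le_sum hterm
  have hbound : (Ps.card : ℚ) * k ≤ n.choose c := by
    have h := le_trans hlow htot
    rw [ff, mul_one_div, div_le_one hchoose] at h
    exact h
  constructor
  · exact_mod_cast hbound
  · intro heq P hP A hAP
    have hA𝒜 : A ∈ 𝒜 := Finset.mem_biUnion.mpr ⟨P, hP, hAP⟩
    have heqQ : (Ps.card : ℚ) * k * ff n c = 1 := by
      rw [ff, mul_one_div, div_eq_one_iff_eq hchoose.ne']
      exact_mod_cast heq
    have hT : ∑ A ∈ 𝒜, (ff n A.card - (ff n c + ss n c * ((A.card : ℚ) - c))) = 0 := by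
      rw [Finset.sum_sub_distrib, hlin, heqQ]
      have : ∑ A ∈ 𝒜, ff n A.card = 1 := le_antisymm htot (heqQ ▸ hlow)
      rw [this]
      ring
    have hzero := (Finset.sum_eq_zero_iff_of_nonneg
      (fun A hA => by linarith [hterm A hA])).mp hT A hA𝒜
    have heqA : ff n A.card = ff n c + ss n c * ((A.card : ℚ) - c) := by linarith
    exact (tangent n c hc hcn A.card (hcard1 A hA𝒜).1 (hcard1 A hA𝒜).2).2 heqA
end
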